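/- arXiv:2008.01138 — 7 statements merged into one kernel-verified Lean document; each statement's English description precedes it below -/
import Mathlib

section
/- Let r ≥ 2 and n ≥ 1. There exist independent random variables X_1, …, X_n taking values in {0, 1, …, r} such that the entropy of S_n = X_1 + ⋯ + X_n equals w₀·H(B_n) + (1 − w₀)·(H(B_{n−1}) + log₂(r − 1)) + h(w₀), where w₀ = 2^{H(B_n) − H(B_{n−1})} / (r − 1 + 2^{H(B_n) − H(B_{n−1})}). Consequently, the maximum of H(S_n) over all choices of the distributions of X_1, …, X_n is at least this value. -/
open MeasureTheory ProbabilityTheory Real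

/-- The binary entropy function `h(p) = -p log₂ p - (1-p) log₂ (1-p)`
(with the convention `0 · log₂ 0 = 0`, automatic since `Real.logb 2 0 = 0`). -/
noncomputable def binEnt (p : ℝ) : ℝ :=
  -(p * Real.logb 2 p) - (1 - p) * Real.logb 2 (1 - p)

/-- The Shannon entropy (in bits) of the Binomial(m, 1/2) distribution,
`H(B_m) = -∑_{k=0}^m C(m,k) 2^{-m} log₂ (C(m,k) 2^{-m})`. -/
noncomputable def HB (m : ℕ) : ℝ :=
  -∑ k ∈ Finset.range (m + 1),
      ((m.choose k : ℝ) * (2 : ℝ) ^ (-(m : ℤ))) *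
        Real.logb 2 ((m.choose k : ℝ) * (2 : ℝ) ^ (-(m : ℤ)))

/-- The Shannon entropy (in bits) of an `ℕ`-valued random variable `S` taking
values in `{0, 1, …, N}`:  `H(S) = -∑_{j=0}^N P(S = j) log₂ P(S = j)`. -/
noncomputable def entS {Ω : Type*} [MeasurableSpace Ω] (μ : Measure Ω)
    (S : Ω → ℕ) (N : ℕ) : ℝ :=
  -∑ j ∈ Finset.range (N + 1),
      (μ {ω | S ω = j}).toReal * Real.logb 2 (μ {ω | S ω = j}).toReal

/-!
Let `X₁` put mass `w₀/2` at `0` and at `r` and mass `(1 - w₀)/(r - 1)` at each of `1, …, r - 1`,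
and let `X₂, …, Xₙ` be uniform on `{0, r}`. The generating function of `Sₙ` is
`∑_{j<r} X^j P_j(X^r)` with `P₀ = w₀ ((1 + X)/2)ⁿ` and `P_j = (1 - w₀)/(r - 1) ((1 + X)/2)ⁿ⁻¹`
for `j ≥ 1`. Distinct pairs `(j, k)` give distinct values `j + r k` of `Sₙ`, so `H(Sₙ)` splits
into the entropy `h(w₀) + (1 - w₀) log₂ (r - 1)` of the residue `j` plus the conditional entropy
`w₀ H(Bₙ) + (1 - w₀) H(Bₙ₋₁)` of the quotient `k`.
-/

open Polynomial Finset

namespace Polynomial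

theorem sum_fin_C_mul_X_pow {R : Type*} [Semiring R] {p : R[X]} {r : ℕ}
    (hp : p.natDegree ≤ r) : ∑ a : Fin (r + 1), C (p.coeff a) * X ^ (a : ℕ) = p := by
  rw [Fin.sum_univ_eq_sum_range (fun k => C (p.coeff k) * X ^ k),
    ← as_sum_range_C_mul_X_pow' p (Nat.lt_succ_of_le hp)]

theorem sum_fin_coeff_eq_eval_one {R : Type*} [Semiring R] {p : R[X]} {r : ℕ} (hp : p.natDegree ≤ r) :
    ∑ a : Fin (r + 1), p.coeff a = p.eval 1 := by
  rw [Fin.sum_univ_eq_sum_range (fun k => p.coeff k), eval_eq_sum_range' (Nat.lt_succ_of_le hp)]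
  simp

variable {R : Type*} [CommSemiring R]

theorem coeff_prod_eq_sum_pi {ι : Type*} [Fintype ι] [DecidableEq ι] {r : ℕ} (G : ι → R[X])
    (hG : ∀ i, (G i).natDegree ≤ r) (s : ℕ) :
    (∏ i, G i).coeff s =
      ∑ ω : ι → Fin (r + 1), if ∑ i, (ω i : ℕ) = s then ∏ i, (G i).coeff (ω i) else 0 := by
  conv_lhs => rw [← prod_congr rfl fun i _ => sum_fin_C_mul_X_pow (hG i), Fintype.prod_sum]
  simp only [prod_mul_distrib, ← map_prod, prod_pow_eq_pow_sum, finsetSum_coeff,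
    coeff_C_mul_X_pow]
  exact sum_congr rfl fun ω _ => by simp only [eq_comm]

theorem coeff_X_pow_mul_expand {r i j : ℕ} (hi : i < r) (hj : j < r) (P : R[X]) (k : ℕ) :
    (X ^ i * expand R r P).coeff (j + r * k) = if i = j then P.coeff k else 0 := by
  rw [coeff_X_pow_mul', coeff_expand (by omega)]
  by_cases hij : i = j
  · subst hij
    simp [Nat.mul_div_cancel_left k (show 0 < r by omega)]
  · have hndvd : i ≤ j + r * k → ¬ r ∣ j + r * k - i := fun hle ⟨t, ht⟩ => hij <| by
      have h : (i + r * t) % r = (j + r * k) % r := by congr 1; omega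
      simpa [Nat.add_mul_mod_self_left, Nat.mod_eq_of_lt hi, Nat.mod_eq_of_lt hj] using h
    split_ifs with hle hdvd
    exacts [absurd hdvd (hndvd hle), rfl, rfl]

theorem coeff_sum_X_pow_mul_expand {r j : ℕ} (hj : j < r) (P : ℕ → R[X]) (k : ℕ) :
    (∑ i ∈ range r, X ^ i * expand R r (P i)).coeff (j + r * k) = (P j).coeff k := by
  rw [finsetSum_coeff, sum_congr rfl fun i hi => coeff_X_pow_mul_expand (mem_range.1 hi) hj _ k,
    sum_ite_eq', if_pos (mem_range.2 hj)]

end Polynomial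

theorem Finset.sum_range_mul_eq_sum_sum {M : Type*} [AddCommMonoid M] (f : ℕ → M) (r K : ℕ) :
    ∑ s ∈ range (K * r), f s = ∑ k ∈ range K, ∑ j ∈ range r, f (j + r * k) := by
  induction K with
  | zero => simp
  | succ K ih => rw [Nat.succ_mul, sum_range_add, ih, sum_range_succ]; simp [add_comm, mul_comm]

theorem one_le_natCast_sub_one {r : ℕ} (hr : 2 ≤ r) : (1 : ℝ) ≤ r - 1 := by
  have : (2 : ℝ) ≤ r := by exact_mod_cast hr
  linarith

noncomputable def pmfOfPGF {G : ℝ[X]} {r : ℕ} (hdeg : G.natDegree ≤ r)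
    (hcoeff : ∀ k, 0 ≤ G.coeff k) (heval : G.eval 1 = 1) : PMF (Fin (r + 1)) :=
  PMF.ofFintype (fun a => ENNReal.ofReal (G.coeff a)) <| by
    rw [← ENNReal.ofReal_sum_of_nonneg fun (a : Fin (r + 1)) _ => hcoeff a, sum_fin_coeff_eq_eval_one hdeg,
      heval, ENNReal.ofReal_one]

theorem exists_iIndepFun_sum_law_eq_coeff_prod {ι : Type} [Fintype ι] (r : ℕ) (G : ι → ℝ[X])
    (hdeg : ∀ i, (G i).natDegree ≤ r) (hcoeff : ∀ i k, 0 ≤ (G i).coeff k)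
    (heval : ∀ i, (G i).eval 1 = 1) :
    ∃ (Ω : Type) (_ : MeasurableSpace Ω) (μ : Measure Ω) (_ : IsProbabilityMeasure μ)
      (X : ι → Ω → ℕ), (∀ i, Measurable (X i)) ∧ iIndepFun X μ ∧ (∀ i ω, X i ω ≤ r) ∧
      ∀ s, (μ {ω | ∑ i, X i ω = s}).toReal = (∏ i, G i).coeff s := by
  classical
  let μ : Measure (ι → Fin (r + 1)) :=
    Measure.pi fun i => (pmfOfPGF (hdeg i) (hcoeff i) (heval i)).toMeasure
  refine ⟨ι → Fin (r + 1), inferInstance, μ, inferInstance, fun i ω => ω i,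
    fun i => measurable_of_countable _, ?_, fun i ω => Fin.is_le (ω i), fun s => ?_⟩
  · exact iIndepFun_pi (X := fun _ (a : Fin (r + 1)) => (a : ℕ))
      fun i => Measurable.of_discrete.aemeasurable
  · have hset : {ω : ι → Fin (r + 1) | ∑ i, (ω i : ℕ) = s} =
        ↑(univ.filter fun ω : ι → Fin (r + 1) => ∑ i, (ω i : ℕ) = s) := by
      ext; simp
    rw [hset, ← sum_measure_singleton, coeff_prod_eq_sum_pi G hdeg, ← sum_filter,
      ENNReal.toReal_sum fun ω _ => measure_ne_top μ _]
    refine sum_congr rfl fun ω _ => ?_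
    simp [μ, pmfOfPGF, ENNReal.toReal_prod, hcoeff]

noncomputable def negMulLogb (x : ℝ) : ℝ := -(x * logb 2 x)

theorem negMulLogb_mul (x y : ℝ) :
    negMulLogb (x * y) = y * negMulLogb x + x * negMulLogb y := by
  have h := negMulLog_mul x y
  simp only [negMulLogb, logb, negMulLog] at h ⊢
  field_simp
  linear_combination h

theorem negMulLogb_div (x y : ℝ) : negMulLogb (x / y) = (negMulLogb x + x * logb 2 y) / y := by
  rw [div_eq_mul_inv, negMulLogb_mul]
  simp only [negMulLogb, logb_inv]
  ring

theorem binEnt_eq (p : ℝ) : binEnt p = negMulLogb p + negMulLogb (1 - p) := by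
  rw [binEnt, negMulLogb, negMulLogb]; ring

theorem entS_eq_sum_negMulLogb {Ω : Type*} [MeasurableSpace Ω] (μ : Measure Ω) (S : Ω → ℕ)
    (N : ℕ) : entS μ S N = ∑ j ∈ range (N + 1), negMulLogb (μ {ω | S ω = j}).toReal := by
  rw [entS, ← sum_neg_distrib]; rfl

noncomputable def fairCoinPGF : ℝ[X] := C 2⁻¹ * (1 + X)

theorem coeff_fairCoinPGF_pow (m k : ℕ) :
    (fairCoinPGF ^ m).coeff k = m.choose k * (2 : ℝ) ^ (-(m : ℤ)) := by
  rw [fairCoinPGF, mul_pow, ← C_pow, coeff_C_mul, coeff_one_add_X_pow, zpow_neg, zpow_natCast,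
    inv_pow, mul_comm]

theorem coeff_fairCoinPGF_pow_nonneg (m k : ℕ) : 0 ≤ (fairCoinPGF ^ m).coeff k := by
  rw [coeff_fairCoinPGF_pow]; positivity

theorem natDegree_fairCoinPGF_le : fairCoinPGF.natDegree ≤ 1 := by
  unfold fairCoinPGF; compute_degree

theorem eval_one_fairCoinPGF : fairCoinPGF.eval 1 = 1 := by
  norm_num [fairCoinPGF]

theorem sum_coeff_fairCoinPGF_pow {m K : ℕ} (hK : m < K) :
    ∑ k ∈ range K, (fairCoinPGF ^ m).coeff k = 1 := by
  have hdeg : (fairCoinPGF ^ m).natDegree < K :=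
    (natDegree_pow_le_of_le m natDegree_fairCoinPGF_le).trans_lt (by simpa using hK)
  simpa [eval_pow, eval_one_fairCoinPGF] using (eval_eq_sum_range' hdeg (1 : ℝ)).symm

theorem HB_eq_sum_negMulLogb {m K : ℕ} (hK : m < K) :
    HB m = ∑ k ∈ range K, negMulLogb ((fairCoinPGF ^ m).coeff k) := by
  simp only [HB, ← sum_neg_distrib, coeff_fairCoinPGF_pow, negMulLogb]
  refine sum_subset (range_subset_range.2 hK) fun k _ hk => ?_
  rw [Nat.choose_eq_zero_of_lt (by simpa using hk)]
  simp

theorem sum_negMulLogb_mul_coeff_fairCoinPGF_pow (c : ℝ) {m K : ℕ} (hK : m < K) :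
    ∑ k ∈ range K, negMulLogb (c * (fairCoinPGF ^ m).coeff k) = negMulLogb c + c * HB m := by
  simp only [negMulLogb_mul, sum_add_distrib, ← sum_mul, ← mul_sum,
    sum_coeff_fairCoinPGF_pow hK, HB_eq_sum_negMulLogb hK, one_mul]

noncomputable def endpointsPGF (r : ℕ) : ℝ[X] := expand ℝ r fairCoinPGF

noncomputable def mixedPGF (r : ℕ) (w : ℝ) : ℝ[X] :=
  expand ℝ r (C w * fairCoinPGF) + ∑ j ∈ Ico 1 r, C ((1 - w) / (r - 1)) * X ^ j

noncomputable def sumPGF (r : ℕ) (w : ℝ) (m : ℕ) : ℝ[X] := mixedPGF r w * endpointsPGF r ^ m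

theorem natDegree_endpointsPGF_le (r : ℕ) : (endpointsPGF r).natDegree ≤ r := by
  rw [endpointsPGF, natDegree_expand]
  simpa using Nat.mul_le_mul_right r natDegree_fairCoinPGF_le

theorem natDegree_mixedPGF_le (r : ℕ) (w : ℝ) : (mixedPGF r w).natDegree ≤ r := by
  refine natDegree_add_le_of_degree_le ?_ (natDegree_sum_le_of_forall_le _ _ fun j hj => ?_)
  · rw [natDegree_expand]
    simpa using Nat.mul_le_mul_right r ((natDegree_C_mul_le _ _).trans natDegree_fairCoinPGF_le)
  · exact (natDegree_C_mul_X_pow_le _ j).trans (mem_Ico.1 hj).2.le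

theorem natDegree_sumPGF_le (r : ℕ) (w : ℝ) (m : ℕ) : (sumPGF r w m).natDegree ≤ (m + 1) * r := by
  refine natDegree_mul_le.trans ?_
  have := natDegree_pow_le_of_le m (natDegree_endpointsPGF_le r)
  have := natDegree_mixedPGF_le r w
  nlinarith

theorem coeff_endpointsPGF_nonneg {r : ℕ} (hr : 0 < r) (k : ℕ) :
    0 ≤ (endpointsPGF r).coeff k := by
  rw [endpointsPGF, coeff_expand hr]
  split_ifs
  exacts [by simpa using coeff_fairCoinPGF_pow_nonneg 1 _, le_rfl]

theorem coeff_mixedPGF_nonneg {r : ℕ} (hr : 0 < r) {w : ℝ} (hw0 : 0 ≤ w) (hw1 : w ≤ 1)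
    (k : ℕ) : 0 ≤ (mixedPGF r w).coeff k := by
  have hr1 : (0 : ℝ) ≤ r - 1 := by
    have : (1 : ℝ) ≤ r := by exact_mod_cast hr
    linarith
  rw [mixedPGF, coeff_add, coeff_expand hr, finsetSum_coeff]
  refine add_nonneg ?_ (sum_nonneg fun j _ => ?_)
  · split_ifs
    · rw [coeff_C_mul]
      exact mul_nonneg hw0 (by simpa using coeff_fairCoinPGF_pow_nonneg 1 _)
    · exact le_rfl
  · rw [coeff_C_mul_X_pow]
    split_ifs
    exacts [div_nonneg (by linarith) hr1, le_rfl]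

theorem eval_one_endpointsPGF (r : ℕ) : (endpointsPGF r).eval 1 = 1 := by
  rw [endpointsPGF, expand_eval, one_pow, eval_one_fairCoinPGF]

theorem eval_one_mixedPGF {r : ℕ} (hr : 2 ≤ r) (w : ℝ) : (mixedPGF r w).eval 1 = 1 := by
  have : (r : ℝ) - 1 ≠ 0 := by linarith [one_le_natCast_sub_one hr]
  simp [mixedPGF, expand_eval, eval_finsetSum, eval_one_fairCoinPGF,
    Nat.cast_sub (by omega : 1 ≤ r)]
  field_simp
  ring

theorem sumPGF_eq_sum_X_pow_mul_expand {r : ℕ} (hr : 0 < r) (w : ℝ) (m : ℕ) :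
    sumPGF r w m = ∑ j ∈ range r, X ^ j * expand ℝ r
      (if j = 0 then C w * fairCoinPGF ^ (m + 1) else C ((1 - w) / (r - 1)) * fairCoinPGF ^ m) := by
  rw [range_eq_Ico, sum_eq_sum_Ico_succ_bot hr, if_pos rfl,
    sum_congr rfl fun j hj => by rw [if_neg (by have := (mem_Ico.1 hj).1; omega)]]
  simp only [sumPGF, mixedPGF, endpointsPGF, add_mul, sum_mul, map_mul, map_pow, expand_C,
    pow_zero, one_mul, zero_add, pow_succ']
  rw [mul_assoc]
  exact congrArg _ (sum_congr rfl fun j _ => by ring)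

theorem coeff_sumPGF {r j : ℕ} (hj : j < r) (w : ℝ) (m k : ℕ) :
    (sumPGF r w m).coeff (j + r * k) =
      if j = 0 then w * (fairCoinPGF ^ (m + 1)).coeff k
      else (1 - w) / (r - 1) * (fairCoinPGF ^ m).coeff k := by
  rw [sumPGF_eq_sum_X_pow_mul_expand (by omega), coeff_sum_X_pow_mul_expand hj]
  split_ifs <;> rw [coeff_C_mul]

theorem sum_negMulLogb_coeff_sumPGF {r : ℕ} (hr : 2 ≤ r) (w : ℝ) (m : ℕ) :
    ∑ s ∈ range ((m + 1) * r + 1), negMulLogb ((sumPGF r w m).coeff s) =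
      w * HB (m + 1) + (1 - w) * (HB m + logb 2 ((r : ℝ) - 1)) + binEnt w := by
  have hr1 : (r : ℝ) - 1 ≠ 0 := by linarith [one_le_natCast_sub_one hr]
  calc ∑ s ∈ range ((m + 1) * r + 1), negMulLogb ((sumPGF r w m).coeff s)
      = ∑ s ∈ range ((m + 2) * r), negMulLogb ((sumPGF r w m).coeff s) := by
        refine sum_subset (range_subset_range.2 (by nlinarith)) fun s _ hs => ?_
        have := natDegree_sumPGF_le r w m
        rw [coeff_eq_zero_of_natDegree_lt (by simp at hs; omega)]
        simp [negMulLogb]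
    _ = ∑ j ∈ range r, ∑ k ∈ range (m + 2), negMulLogb ((sumPGF r w m).coeff (j + r * k)) := by
        rw [sum_range_mul_eq_sum_sum, sum_comm]
    _ = ∑ k ∈ range (m + 2), negMulLogb (w * (fairCoinPGF ^ (m + 1)).coeff k) +
          (r - 1) * ∑ k ∈ range (m + 2),
            negMulLogb ((1 - w) / (r - 1) * (fairCoinPGF ^ m).coeff k) := by
        rw [range_eq_Ico, sum_eq_sum_Ico_succ_bot (by omega)]
        congr 1
        · exact sum_congr rfl fun k _ => by rw [coeff_sumPGF (by omega), if_pos rfl]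
        · rw [sum_congr rfl fun j hj => sum_congr rfl fun k _ => by
            rw [coeff_sumPGF (mem_Ico.1 hj).2, if_neg (by have := (mem_Ico.1 hj).1; omega)]]
          rw [sum_const, Nat.card_Ico, nsmul_eq_mul, Nat.cast_sub (by omega), Nat.cast_one]
    _ = w * HB (m + 1) + (1 - w) * (HB m + logb 2 ((r : ℝ) - 1)) + binEnt w := by
        rw [sum_negMulLogb_mul_coeff_fairCoinPGF_pow _ (by omega),
          sum_negMulLogb_mul_coeff_fairCoinPGF_pow _ (by omega), negMulLogb_div, binEnt_eq]
        field_simp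
        ring

/-- For `r ≥ 2`, `n ≥ 1`, there exist independent random variables
`X_1, …, X_n` with values in `{0, 1, …, r}` whose sum `S_n` has entropy exactly
`w₀ H(B_n) + (1-w₀)(H(B_{n-1}) + log₂(r-1)) + h(w₀)`, where
`w₀ = 2^{H(B_n)-H(B_{n-1})} / (r - 1 + 2^{H(B_n)-H(B_{n-1})})`.  Consequently the
maximum of `H(S_n)` over all choices of the distributions is at least this value. -/
theorem maxEnt_lower_bound (r n : ℕ) (hr : 2 ≤ r) (hn : 1 ≤ n)
    (w₀ : ℝ)
    (hw₀ : w₀ = (2 : ℝ) ^ (HB n - HB (n - 1)) /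
        ((r : ℝ) - 1 + (2 : ℝ) ^ (HB n - HB (n - 1)))) :
    ∃ (Ω : Type) (_ : MeasurableSpace Ω) (μ : Measure Ω) (_ : IsProbabilityMeasure μ)
      (X : Fin n → Ω → ℕ),
      (∀ i, Measurable (X i)) ∧
      iIndepFun X μ ∧
      (∀ i ω, X i ω ≤ r) ∧
      entS μ (fun ω => ∑ i, X i ω) (n * r) =
        w₀ * HB n + (1 - w₀) * (HB (n - 1) + Real.logb 2 ((r : ℝ) - 1)) + binEnt w₀ := by
  obtain ⟨m, rfl⟩ : ∃ m, n = m + 1 := ⟨n - 1, by omega⟩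
  rw [Nat.add_sub_cancel] at hw₀ ⊢
  have hr1 := one_le_natCast_sub_one hr
  have hpow : 0 < (2 : ℝ) ^ (HB (m + 1) - HB m) := by positivity
  have hw0 : 0 ≤ w₀ := hw₀ ▸ div_nonneg hpow.le (by linarith)
  have hw1 : w₀ ≤ 1 := hw₀ ▸ (div_le_one (by linarith)).2 (by linarith)
  let G : Fin (m + 1) → ℝ[X] := Fin.cons (mixedPGF r w₀) fun _ => endpointsPGF r
  have hG : ∏ i, G i = sumPGF r w₀ m := by simp [G, sumPGF, Fin.prod_univ_succ]
  obtain ⟨Ω, mΩ, μ, hμ, X, hX, hind, hXr, hlaw⟩ := exists_iIndepFun_sum_law_eq_coeff_prod r G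
    (Fin.cases (natDegree_mixedPGF_le r w₀) fun _ => natDegree_endpointsPGF_le r)
    (Fin.cases (coeff_mixedPGF_nonneg (by omega) hw0 hw1)
      fun _ => coeff_endpointsPGF_nonneg (by omega))
    (Fin.cases (eval_one_mixedPGF hr w₀) fun _ => eval_one_endpointsPGF r)
  refine ⟨Ω, mΩ, μ, hμ, X, hX, hind, hXr, ?_⟩
  rw [entS_eq_sum_negMulLogb]
  simp only [hlaw, hG]
  exact sum_negMulLogb_coeff_sumPGF hr w₀ m
end

section
/- Let r ≥ 2 and let X_1, X_2 be independent random variables taking values in {0, 1, …, r}. Then H(X_1 + X_2) ≤ 1 + w₀/2 + (1 − w₀) log₂(r − 1) + h(w₀), where w₀ = √2 / (r − 1 + √2); moreover, there exists a choice of the distributions of X_1 and X_2 for which equality holds, i.e. max over all distributions of H(X_1 + X_2) equals 1 + w₀/2 + (1 − w₀) log₂(r − 1) + h(w₀). -/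
/-! Write `s j = P(S₂ = j)`. Independence gives
`P(S₂ = 0) P(S₂ = 2r) = P(X₁ = 0, X₂ = r) P(X₁ = r, X₂ = 0)`, hence `4 s₀ s_{2r} ≤ s_r²`.
Three masses `a, v, c` with `4ac ≤ v²` carry at most `3/2` bits per unit of mass (the profile of
Binomial(2, 1/2)), and the other `2r - 2` values at most `log₂ (2r - 2)`. Grouping by the corner
mass `w = s₀ + s_r + s_{2r}`,
`H(S₂) ≤ h(w) + 3w/2 + (1 - w) log₂ (2r - 2) ≤ log₂ (2√2 + 2r - 2)`, with equality in the last
step exactly at `w = w₀`; this number is the bound of the statement. Equality throughout is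
attained by `X₂` uniform on `{0, r}` and `P(X₁ = i) ∝ 1/√2` for `i ∈ {0, r}`, `∝ 1` otherwise. -/

open MeasureTheory ProbabilityTheory Real

open Finset

namespace Real

lemma two_mul_le_log_sub_log {x : ℝ} (h0 : 0 ≤ x) (h1 : x < 1) :
    2 * x ≤ log (1 + x) - log (1 - x) := by
  have hs := hasSum_log_sub_log_of_abs_lt_one (by rwa [abs_of_nonneg h0])
  simpa using le_hasSum hs 0 fun k _ ↦ by positivity

lemma binEntropy_le_mul_log_two_of_le_two_inv {p : ℝ} (hp0 : 0 ≤ p) (hp : p ≤ 2⁻¹) :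
    binEntropy p ≤ (2⁻¹ + 2 * p * (1 - p)) * log 2 := by
  let f := fun p ↦ binEntropy p - (2⁻¹ + 2 * p * (1 - p)) * log 2
  have hmono : MonotoneOn f (Set.Icc 0 2⁻¹) := by
    refine monotoneOn_of_hasDerivWithinAt_nonneg (f' := fun p ↦
      log (1 - p) - log p - 2 * (1 - 2 * p) * log 2) (convex_Icc _ _) (by fun_prop) ?_ ?_
    · intro x hx
      rw [interior_Icc] at hx
      have hpoly : HasDerivAt (fun p : ℝ ↦ (2⁻¹ + 2 * p * (1 - p)) * log 2)
          (2 * (1 - 2 * x) * log 2) x := by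
        refine (((((hasDerivAt_id' x).const_mul 2).fun_mul
          ((hasDerivAt_id' x).const_sub 1)).const_add 2⁻¹).mul_const (log 2)).congr_deriv ?_
        ring
      exact ((hasDerivAt_binEntropy hx.1.ne' (by linarith [hx.2])).sub hpoly).hasDerivWithinAt
    · intro x hx
      rw [interior_Icc] at hx
      have hlog : log (1 - x) - log x = log (1 + (1 - 2 * x)) - log (1 - (1 - 2 * x)) := by
        rw [show 1 + (1 - 2 * x) = 2 * (1 - x) by ring, show 1 - (1 - 2 * x) = 2 * x by ring,
          log_mul two_ne_zero (by linarith [hx.2]), log_mul two_ne_zero hx.1.ne']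
        ring
      have h2 := two_mul_le_log_sub_log (x := 1 - 2 * x) (by linarith [hx.2]) (by linarith [hx.1])
      have hl : log 2 < 1 := by linarith [log_two_lt_d9]
      nlinarith [hx.2]
  have := hmono ⟨hp0, hp⟩ ⟨by norm_num, le_rfl⟩ hp
  simp only [f, binEntropy_two_inv] at this
  linarith

lemma binEntropy_le_mul_log_two {p : ℝ} (hp0 : 0 ≤ p) (hp1 : p ≤ 1) :
    binEntropy p ≤ (2⁻¹ + 2 * p * (1 - p)) * log 2 := by
  rcases le_total p 2⁻¹ with hp | hp
  · exact binEntropy_le_mul_log_two_of_le_two_inv hp0 hp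
  · have := binEntropy_le_mul_log_two_of_le_two_inv (p := 1 - p) (by linarith) (by linarith)
    rw [binEntropy_one_sub] at this
    linarith

lemma negMulLog_le_neg_mul_log_add_sub {s q : ℝ} (hs : 0 ≤ s) (hq : 0 < q) :
    negMulLog s ≤ -(s * log q) + (q - s) := by
  rcases hs.eq_or_lt with rfl | hs
  · simp [hq.le]
  have h := log_le_sub_one_of_pos (div_pos hq hs)
  rw [log_div hq.ne' hs.ne'] at h
  have h' := mul_le_mul_of_nonneg_left h hs.le
  rw [mul_sub_one, mul_div_cancel₀ _ hs.ne'] at h'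
  rw [negMulLog]
  linarith

lemma sum_negMulLog_le {ι : Type*} (t : Finset ι) {p : ι → ℝ} (hp : ∀ i ∈ t, 0 ≤ p i) :
    ∑ i ∈ t, negMulLog (p i) ≤ negMulLog (∑ i ∈ t, p i) + (∑ i ∈ t, p i) * log #t := by
  rcases t.eq_empty_or_nonempty with rfl | ht
  · simp
  have hn : (0 : ℝ) < #t := by exact_mod_cast ht.card_pos
  have := concaveOn_negMulLog.le_map_sum (t := t) (w := fun _ ↦ (#t : ℝ)⁻¹) (p := p)
    (fun _ _ ↦ by positivity) (by simp [hn.ne']) hp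
  simp only [smul_eq_mul, ← mul_sum, negMulLog_mul] at this
  rw [negMulLog, log_inv] at this
  have h' := mul_le_mul_of_nonneg_left this hn.le
  field_simp at h'
  linarith

lemma negMulLog_add_negMulLog_le {x y : ℝ} (hx : 0 ≤ x) (hy : 0 ≤ y) :
    negMulLog x + negMulLog y ≤ negMulLog (x + y) + (x + y) * log 2 := by
  simpa using sum_negMulLog_le univ (p := ![x, y]) (by simp [Fin.forall_fin_two, hx, hy])

lemma negMulLog_add_negMulLog_eq {x y : ℝ} (h : 0 < x + y) :
    negMulLog x + negMulLog y = negMulLog (x + y) + (x + y) * binEntropy (x / (x + y)) := by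
  set t := x / (x + y)
  have hx : (x + y) * t = x := mul_div_cancel₀ x h.ne'
  have hy : (x + y) * (1 - t) = y := by rw [mul_one_sub, hx]; ring
  have ex := negMulLog_mul (x + y) t
  have ey := negMulLog_mul (x + y) (1 - t)
  rw [hx] at ex
  rw [hy] at ey
  rw [ex, ey, binEntropy_eq_negMulLog_add_negMulLog_one_sub]
  ring

lemma sum_negMulLog_div {ι : Type*} {t : Finset ι} {g : ι → ℝ} {Z : ℝ} (hZ : 0 < Z)
    (hg : ∑ i ∈ t, g i = Z) :
    ∑ i ∈ t, negMulLog (g i / Z) = (∑ i ∈ t, negMulLog (g i)) / Z + log Z := by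
  simp only [div_eq_mul_inv, negMulLog_mul, sum_add_distrib, ← sum_mul, hg]
  rw [negMulLog, log_inv, ← mul_sum]
  field_simp

lemma binEntropy_add_mul_log_add_mul_log_le {w x y : ℝ} (hw0 : 0 ≤ w) (hw1 : w ≤ 1)
    (hx : 0 < x) (hy : 0 < y) :
    binEntropy w + w * log x + (1 - w) * log y ≤ log (x + y) := by
  have h1 := negMulLog_le_neg_mul_log_add_sub hw0 (div_pos hx (add_pos hx hy))
  have h2 := negMulLog_le_neg_mul_log_add_sub (sub_nonneg.2 hw1) (div_pos hy (add_pos hx hy))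
  rw [log_div hx.ne' (by positivity)] at h1
  rw [log_div hy.ne' (by positivity)] at h2
  have : x / (x + y) + y / (x + y) = 1 := by field_simp
  rw [binEntropy_eq_negMulLog_add_negMulLog_one_sub]
  nlinarith

lemma negMulLog_add_add_le_of_four_mul_le_sq {a v c : ℝ} (ha : 0 ≤ a) (hv : 0 ≤ v) (hc : 0 ≤ c)
    (h : 4 * a * c ≤ v ^ 2) :
    negMulLog a + negMulLog v + negMulLog c ≤
      negMulLog (a + v + c) + 3 / 2 * (a + v + c) * log 2 := by
  set A := a + v / 2
  set C := c + v / 2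
  have hw : a + v + c = A + C := by ring
  rcases (show 0 ≤ A + C by positivity).eq_or_lt with hw0 | hw0
  · obtain ⟨rfl, rfl, rfl⟩ : a = 0 ∧ v = 0 ∧ c = 0 := by refine ⟨?_, ?_, ?_⟩ <;> linarith
    simp
  -- Splitting `v` into two halves gains `v log 2`; merging `a` and `c` with one half each
  -- loses at most `(A + C) log 2`, and `4ac ≤ v²` makes `(A, C)` balanced enough.
  have hv2 : negMulLog v = 2 * negMulLog (v / 2) - v * log 2 := by
    have := negMulLog_mul (v / 2) 2
    rw [div_mul_cancel₀ v two_ne_zero] at this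
    rw [this, show negMulLog 2 = -(2 * log 2) by simp [negMulLog]]
    ring
  have hA : negMulLog a + negMulLog (v / 2) ≤ negMulLog A + A * log 2 :=
    negMulLog_add_negMulLog_le ha (by positivity)
  have hC : negMulLog c + negMulLog (v / 2) ≤ negMulLog C + C * log 2 :=
    negMulLog_add_negMulLog_le hc (by positivity)
  set t := A / (A + C)
  have hAC : negMulLog A + negMulLog C = negMulLog (A + C) + (A + C) * binEntropy t :=
    negMulLog_add_negMulLog_eq hw0
  have hbin := mul_le_mul_of_nonneg_left (binEntropy_le_mul_log_two (p := t) (by positivity)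
    (div_le_one_of_le₀ (by linarith) hw0.le)) hw0.le
  have hmix : (A + C) * (2 * t * (1 - t)) * log 2 ≤ v * log 2 := by
    refine mul_le_mul_of_nonneg_right ?_ (log_nonneg one_le_two)
    have e : (A + C) * (2 * t * (1 - t)) = 2 * A * C / (A + C) := by
      simp only [t]; field_simp; ring
    rw [e, div_le_iff₀ hw0]
    nlinarith
  rw [hv2, hw]
  linarith

end Real

namespace Finset

lemma sum_range_two_mul_add_one {M : Type*} [AddCommMonoid M] {r : ℕ} (hr : r ≠ 0)
    (F : ℕ → M) :
    ∑ j ∈ range (2 * r + 1), F j =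
      F 0 + F r + F (2 * r) + ∑ j ∈ range (2 * r + 1) \ {0, r, 2 * r}, F j := by
  have hsub : ({0, r, 2 * r} : Finset ℕ) ⊆ range (2 * r + 1) := by
    intro j; simp only [mem_insert, mem_singleton, mem_range]; omega
  rw [← sum_sdiff hsub, add_comm, sum_insert (by simp; omega), sum_pair (by omega)]
  simp only [add_assoc]

lemma card_range_two_mul_add_one_sdiff {r : ℕ} (hr : r ≠ 0) :
    #(range (2 * r + 1) \ {0, r, 2 * r}) = 2 * r - 2 := by
  have hsub : ({0, r, 2 * r} : Finset ℕ) ⊆ range (2 * r + 1) := by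
    intro j; simp only [mem_insert, mem_singleton, mem_range]; omega
  rw [card_sdiff_of_subset hsub, card_range, card_insert_of_notMem (by simp; omega),
    card_pair (by omega)]
  omega

end Finset

lemma sum_negMulLog_le_of_four_mul_le_sq {r : ℕ} (hr : 2 ≤ r) {s : ℕ → ℝ} (hs : ∀ j, 0 ≤ s j)
    (hsum : ∑ j ∈ range (2 * r + 1), s j = 1) (hcorner : 4 * s 0 * s (2 * r) ≤ s r ^ 2) :
    ∑ j ∈ range (2 * r + 1), negMulLog (s j) ≤ log (2 * (r - 1 + √2)) := by
  have hr0 : r ≠ 0 := by omega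
  rw [sum_range_two_mul_add_one hr0] at hsum ⊢
  set J := range (2 * r + 1) \ {0, r, 2 * r}
  set w := s 0 + s r + s (2 * r)
  have hw0 : 0 ≤ w := add_nonneg (add_nonneg (hs 0) (hs r)) (hs _)
  have hw1 : w ≤ 1 := by linarith [sum_nonneg fun j (_ : j ∈ J) ↦ hs j]
  have hcorners := negMulLog_add_add_le_of_four_mul_le_sq (hs 0) (hs r) (hs (2 * r)) hcorner
  have hinner := sum_negMulLog_le J fun j _ ↦ hs j
  have hcard : ((#J : ℕ) : ℝ) = 2 * r - 2 := by
    rw [card_range_two_mul_add_one_sdiff hr0, Nat.cast_sub (by omega)]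
    push_cast; ring
  rw [show ∑ j ∈ J, s j = 1 - w by linarith, hcard] at hinner
  have hopt := binEntropy_add_mul_log_add_mul_log_le (w := w) (x := 2 * √2) (y := 2 * r - 2)
    hw0 hw1 (by positivity) (by linarith [(Nat.ofNat_le_cast.2 hr : (2 : ℝ) ≤ r)])
  have hlog : log (2 * √2) = 3 / 2 * log 2 := by
    rw [log_mul two_ne_zero (by positivity), log_sqrt zero_le_two]; ring
  rw [binEntropy_eq_negMulLog_add_negMulLog_one_sub, hlog,
    show 2 * √2 + (2 * r - 2) = 2 * (r - 1 + √2) by ring] at hopt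
  linarith

lemma entS_eq_sum_negMulLog_div {Ω : Type*} [MeasurableSpace Ω] (μ : Measure Ω) (S : Ω → ℕ)
    (N : ℕ) :
    entS μ S N = (∑ j ∈ range (N + 1), negMulLog (μ {ω | S ω = j}).toReal) / log 2 := by
  simp only [entS, logb, negMulLog, sum_div, ← sum_neg_distrib]
  congr 1; ext; ring

lemma sum_toReal_measure_eq_one {Ω : Type*} [MeasurableSpace Ω] {μ : Measure Ω}
    [IsProbabilityMeasure μ] {S : Ω → ℕ} (hS : Measurable S) {N : ℕ} (hSN : ∀ ω, S ω ≤ N) :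
    ∑ j ∈ range (N + 1), (μ {ω | S ω = j}).toReal = 1 := by
  have h := sum_measure_preimage_singleton (μ := μ) (range (N + 1)) fun j _ ↦
    hS (measurableSet_singleton j)
  have huniv : S ⁻¹' ↑(range (N + 1)) = Set.univ :=
    Set.eq_univ_of_forall fun ω ↦ by simpa [Nat.lt_succ_iff] using hSN ω
  rw [huniv, measure_univ] at h
  rw [← ENNReal.toReal_sum fun _ _ ↦ measure_ne_top _ _]
  exact congrArg ENNReal.toReal h |>.trans ENNReal.toReal_one

/-- `P(S = 0) P(S = 2r) = P(X₁ = 0, X₂ = r) P(X₁ = r, X₂ = 0)` by independence, and the two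
events on the right are disjoint parts of `{S = r}`. -/
lemma ProbabilityTheory.IndepFun.four_mul_measure_add_eq_zero_mul_two_mul_le_sq {Ω : Type*}
    [MeasurableSpace Ω] {μ : Measure Ω} [IsFiniteMeasure μ] {X₁ X₂ : Ω → ℕ}
    (hX₁ : Measurable X₁) (hX₂ : Measurable X₂) (hind : IndepFun X₁ X₂ μ) {r : ℕ} (hr : r ≠ 0)
    (h₁ : ∀ ω, X₁ ω ≤ r) (h₂ : ∀ ω, X₂ ω ≤ r) :
    4 * (μ {ω | X₁ ω + X₂ ω = 0}).toReal * (μ {ω | X₁ ω + X₂ ω = 2 * r}).toReal ≤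
      (μ {ω | X₁ ω + X₂ ω = r}).toReal ^ 2 := by
  set p := fun i ↦ (μ (X₁ ⁻¹' {i})).toReal
  set q := fun i ↦ (μ (X₂ ⁻¹' {i})).toReal
  have joint : ∀ a b, (μ (X₁ ⁻¹' {a} ∩ X₂ ⁻¹' {b})).toReal = p a * q b := fun a b ↦ by
    rw [hind.measure_inter_preimage_eq_mul _ _ (measurableSet_singleton a)
      (measurableSet_singleton b), ENNReal.toReal_mul]
  have h0 : {ω | X₁ ω + X₂ ω = 0} = X₁ ⁻¹' {0} ∩ X₂ ⁻¹' {0} := by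
    ext ω; simp
  have h2r : {ω | X₁ ω + X₂ ω = 2 * r} = X₁ ⁻¹' {r} ∩ X₂ ⁻¹' {r} := by
    ext ω
    simp only [Set.mem_ofPred_eq, Set.mem_inter_iff, Set.mem_preimage, Set.mem_singleton_iff]
    have := h₁ ω; have := h₂ ω; omega
  have hmid : p 0 * q r + p r * q 0 ≤ (μ {ω | X₁ ω + X₂ ω = r}).toReal := by
    rw [← joint, ← joint, ← ENNReal.toReal_add (measure_ne_top _ _) (measure_ne_top _ _),
      ENNReal.toReal_le_toReal (by finiteness) (measure_ne_top _ _),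
      ← measure_union _ ((hX₁ (measurableSet_singleton r)).inter (hX₂ (measurableSet_singleton 0)))]
    · refine measure_mono (Set.union_subset ?_ ?_) <;> intro ω ⟨ha, hb⟩ <;> simp_all
    · rw [Set.disjoint_left]
      rintro ω ⟨ha, -⟩ ⟨hb, -⟩
      simp_all [eq_comm]
  rw [h0, h2r, joint, joint]
  have := sq_nonneg (p 0 * q r - p r * q 0)
  have hnn : 0 ≤ p 0 * q r + p r * q 0 := by positivity
  nlinarith [pow_le_pow_left₀ hnn hmid 2]

lemma one_add_div_two_add_mul_logb_add_binEnt_eq {r w₀ : ℝ} (hr : 1 < r)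
    (hw₀ : w₀ = √2 / (r - 1 + √2)) :
    1 + w₀ / 2 + (1 - w₀) * logb 2 (r - 1) + binEnt w₀ = logb 2 (2 * (r - 1 + √2)) := by
  have hD : 0 < r - 1 + √2 := by positivity
  have hlogw : log w₀ = log 2 / 2 - log (r - 1 + √2) := by
    rw [hw₀, log_div (by positivity) hD.ne', log_sqrt zero_le_two]
  have hlogw' : log (1 - w₀) = log (r - 1) - log (r - 1 + √2) := by
    rw [show 1 - w₀ = (r - 1) / (r - 1 + √2) by rw [hw₀]; field_simp; ring,
      log_div (by linarith) hD.ne']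
  have hlog2 : log 2 ≠ 0 := (log_pos one_lt_two).ne'
  simp only [binEnt, logb, hlogw, hlogw', log_mul two_ne_zero hD.ne']
  field_simp
  ring

/-- Up to normalisation, `summandWeight r` is the law of `X₁` and `sumWeight r` that of `X₁ + X₂`
at the maximiser. -/
noncomputable def summandWeight (r i : ℕ) : ℝ := if i = 0 ∨ i = r then (√2)⁻¹ else 1

noncomputable def sumWeight (r j : ℕ) : ℝ :=
  if j = 0 ∨ j = 2 * r then (√2)⁻¹ else if j = r then √2 else 1

lemma inv_sqrt_two_add_inv_sqrt_two : (√2)⁻¹ + (√2)⁻¹ = √2 := by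
  rw [← two_mul, ← div_eq_mul_inv, div_sqrt]

lemma summandWeight_nonneg (r i : ℕ) : 0 ≤ summandWeight r i := by
  unfold summandWeight; split_ifs <;> positivity

lemma sum_summandWeight {r : ℕ} (hr : r ≠ 0) :
    ∑ i ∈ range (r + 1), summandWeight r i = r - 1 + √2 := by
  obtain ⟨m, rfl⟩ := Nat.exists_eq_add_one_of_ne_zero hr
  have hmid : ∀ i ∈ range m, summandWeight (m + 1) (i + 1) = 1 := fun i hi ↦
    if_neg (by simp at hi; omega)
  rw [sum_range_succ, sum_range_succ', sum_congr rfl hmid]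
  simp [summandWeight, add_assoc, inv_sqrt_two_add_inv_sqrt_two]

lemma sumWeight_eq {r j : ℕ} (hr : r ≠ 0) (hj : j ≤ 2 * r) :
    sumWeight r j = (if j ≤ r then summandWeight r j else 0) +
      (if r ≤ j then summandWeight r (j - r) else 0) := by
  unfold sumWeight summandWeight
  rcases lt_trichotomy j r with h | rfl | h
  · simp [show j ≠ 2 * r by omega, h.le, h.ne, h.not_ge]
  · simp [hr, inv_sqrt_two_add_inv_sqrt_two]
  · simp [h.ne', h.not_ge, h.le]
    exact if_congr (by omega) rfl rfl

lemma sumWeight_of_mem {r j : ℕ} (hj : j ∈ range (2 * r + 1) \ {0, r, 2 * r}) :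
    sumWeight r j = 1 := by
  simp only [mem_sdiff, mem_insert, mem_singleton] at hj
  rw [sumWeight, if_neg (by tauto), if_neg (by tauto)]

lemma sum_sumWeight {r : ℕ} (hr : r ≠ 0) :
    ∑ j ∈ range (2 * r + 1), sumWeight r j = 2 * (r - 1 + √2) := by
  rw [sum_range_two_mul_add_one hr, sum_congr rfl fun j hj ↦ sumWeight_of_mem hj, sum_const,
    card_range_two_mul_add_one_sdiff hr, nsmul_one, Nat.cast_sub (by omega)]
  simp only [sumWeight]
  simp [hr]
  linear_combination inv_sqrt_two_add_inv_sqrt_two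

lemma sum_negMulLog_sumWeight {r : ℕ} (hr : r ≠ 0) :
    ∑ j ∈ range (2 * r + 1), negMulLog (sumWeight r j) = 0 := by
  rw [sum_range_two_mul_add_one hr, sum_congr rfl fun j hj ↦ by rw [sumWeight_of_mem hj]]
  simp [sumWeight, hr, negMulLog]
  linear_combination log √2 * inv_sqrt_two_add_inv_sqrt_two

lemma natCast_sub_one_add_sqrt_two_pos {r : ℕ} (hr : r ≠ 0) : (0 : ℝ) < r - 1 + √2 := by
  have : (1 : ℝ) ≤ r := by exact_mod_cast Nat.one_le_iff_ne_zero.2 hr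
  positivity

noncomputable def summandPMF {r : ℕ} (hr : r ≠ 0) : PMF (Fin (r + 1)) :=
  PMF.ofFintype (fun i ↦ ENNReal.ofReal (summandWeight r i / (r - 1 + √2))) <| by
    have hD := natCast_sub_one_add_sqrt_two_pos hr
    rw [Fin.sum_univ_eq_sum_range (fun i ↦ ENNReal.ofReal (summandWeight r i / (r - 1 + √2))),
      ← ENNReal.ofReal_sum_of_nonneg fun i _ ↦ div_nonneg (summandWeight_nonneg r i) hD.le,
      ← sum_div, sum_summandWeight hr, div_self hD.ne', ENNReal.ofReal_one]

lemma toReal_summandPMF_toMeasure_eq {r : ℕ} (hr : r ≠ 0) (k : ℕ) :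
    ((summandPMF hr).toMeasure {i | (i : ℕ) = k}).toReal =
      (if k ≤ r then summandWeight r k else 0) / (r - 1 + √2) := by
  rw [PMF.toMeasure_apply_fintype]
  simp only [Set.indicator_apply, Set.mem_ofPred_eq, summandPMF, PMF.ofFintype_apply]
  rw [Fin.sum_univ_eq_sum_range (fun i ↦ if i = k then
    ENNReal.ofReal (summandWeight r i / (r - 1 + √2)) else 0), sum_ite_eq']
  simp only [mem_range, Nat.lt_succ_iff]
  split_ifs
  · exact ENNReal.toReal_ofReal
      (div_nonneg (summandWeight_nonneg r k) (natCast_sub_one_add_sqrt_two_pos hr).le)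
  · simp

lemma exists_indepFun_measure_add_eq_sumWeight {r : ℕ} (hr : r ≠ 0) :
    ∃ (Ω : Type) (_ : MeasurableSpace Ω) (μ : Measure Ω) (_ : IsProbabilityMeasure μ)
      (X₁ X₂ : Ω → ℕ), Measurable X₁ ∧ Measurable X₂ ∧ IndepFun X₁ X₂ μ ∧
      (∀ ω, X₁ ω ≤ r) ∧ (∀ ω, X₂ ω ≤ r) ∧
      ∀ j ≤ 2 * r, (μ {ω | X₁ ω + X₂ ω = j}).toReal = sumWeight r j / (2 * (r - 1 + √2)) := by
  let μ₁ := (summandPMF hr).toMeasure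
  let μ₂ := (PMF.uniformOfFintype Bool).toMeasure
  refine ⟨Fin (r + 1) × Bool, inferInstance, μ₁.prod μ₂, inferInstance, fun ω ↦ ω.1,
    fun ω ↦ bif ω.2 then r else 0, .of_discrete, .of_discrete,
    indepFun_prod (X := fun i : Fin (r + 1) ↦ (i : ℕ)) (Y := fun b ↦ bif b then r else 0)
      .of_discrete .of_discrete, fun ω ↦ ω.1.is_le, fun ⟨_, b⟩ ↦ by cases b <;> simp, ?_⟩
  intro j hj
  have hμ₂ : ∀ b, μ₂ {b} = 2⁻¹ := fun b ↦ by simp [μ₂]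
  have hμ₁ : (μ₁ {i | (i : ℕ) + r = j}).toReal =
      (if r ≤ j then summandWeight r (j - r) else 0) / (r - 1 + √2) := by
    split_ifs with h
    · rw [show {i : Fin (r + 1) | (i : ℕ) + r = j} = {i : Fin (r + 1) | (i : ℕ) = j - r} by
        ext; simp; omega, toReal_summandPMF_toMeasure_eq, if_pos (by omega)]
    · rw [show {i : Fin (r + 1) | (i : ℕ) + r = j} = ∅ by ext; simp; omega]
      simp
  have hset : {ω : Fin (r + 1) × Bool | ω.1 + (bif ω.2 then r else 0) = j} =
      {i : Fin (r + 1) | (i : ℕ) = j} ×ˢ {false} ∪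
        {i : Fin (r + 1) | (i : ℕ) + r = j} ×ˢ {true} := by
    ext ⟨i, b⟩; cases b <;> simp
  have hD := natCast_sub_one_add_sqrt_two_pos hr
  rw [hset, measure_union (by simp [Set.disjoint_left]) (.of_discrete), Measure.prod_prod,
    Measure.prod_prod, hμ₂, hμ₂, ENNReal.toReal_add (by finiteness) (by finiteness),
    ENNReal.toReal_mul, ENNReal.toReal_mul, toReal_summandPMF_toMeasure_eq, hμ₁,
    sumWeight_eq hr hj, ENNReal.toReal_inv, ENNReal.toReal_ofNat]
  field_simp

/-- For `r ≥ 2` and independent random variables `X₁, X₂` with values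
in `{0, 1, …, r}`, the entropy of `S₂ = X₁ + X₂` satisfies
`H(S₂) ≤ 1 + w₀/2 + (1-w₀) log₂(r-1) + h(w₀)` where `w₀ = √2/(r-1+√2)`, and the bound
is attained by some choice of the distributions, i.e. it equals `max H(S₂)`. -/
theorem maxEnt_sum_two (r : ℕ) (hr : 2 ≤ r)
    (w₀ : ℝ) (hw₀ : w₀ = Real.sqrt 2 / ((r : ℝ) - 1 + Real.sqrt 2)) :
    (∀ (Ω : Type) (_ : MeasurableSpace Ω) (μ : Measure Ω), IsProbabilityMeasure μ →
      ∀ X₁ X₂ : Ω → ℕ, Measurable X₁ → Measurable X₂ → IndepFun X₁ X₂ μ →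
        (∀ ω, X₁ ω ≤ r) → (∀ ω, X₂ ω ≤ r) →
        entS μ (fun ω => X₁ ω + X₂ ω) (2 * r) ≤
          1 + w₀ / 2 + (1 - w₀) * Real.logb 2 ((r : ℝ) - 1) + binEnt w₀) ∧
    (∃ (Ω : Type) (_ : MeasurableSpace Ω) (μ : Measure Ω) (_ : IsProbabilityMeasure μ)
      (X₁ X₂ : Ω → ℕ),
      Measurable X₁ ∧ Measurable X₂ ∧ IndepFun X₁ X₂ μ ∧
      (∀ ω, X₁ ω ≤ r) ∧ (∀ ω, X₂ ω ≤ r) ∧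
      entS μ (fun ω => X₁ ω + X₂ ω) (2 * r) =
        1 + w₀ / 2 + (1 - w₀) * Real.logb 2 ((r : ℝ) - 1) + binEnt w₀) := by
  have hr0 : r ≠ 0 := by omega
  rw [one_add_div_two_add_mul_logb_add_binEnt_eq (by exact_mod_cast hr) hw₀]
  refine ⟨fun Ω _ μ _ X₁ X₂ hX₁ hX₂ hind hb₁ hb₂ ↦ ?_, ?_⟩
  · have hsum := sum_toReal_measure_eq_one (μ := μ) (hX₁.add hX₂) (N := 2 * r) fun ω ↦
      Nat.add_le_add (hb₁ ω) (hb₂ ω) |>.trans_eq (two_mul r).symm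
    rw [entS_eq_sum_negMulLog_div]
    exact div_le_div_of_nonneg_right (sum_negMulLog_le_of_four_mul_le_sq hr
      (fun _ ↦ ENNReal.toReal_nonneg) hsum
      (hind.four_mul_measure_add_eq_zero_mul_two_mul_le_sq hX₁ hX₂ hr0 hb₁ hb₂))
      (log_nonneg one_le_two)
  · obtain ⟨Ω, _, μ, _, X₁, X₂, hX₁, hX₂, hind, hb₁, hb₂, hlaw⟩ :=
      exists_indepFun_measure_add_eq_sumWeight hr0
    refine ⟨Ω, _, μ, ‹_›, X₁, X₂, hX₁, hX₂, hind, hb₁, hb₂, ?_⟩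
    have hZ : (0 : ℝ) < 2 * (r - 1 + √2) := by linarith [natCast_sub_one_add_sqrt_two_pos hr0]
    rw [entS_eq_sum_negMulLog_div, sum_congr rfl fun j hj ↦ by
        rw [hlaw j (Nat.lt_succ_iff.1 (mem_range.1 hj))],
      sum_negMulLog_div hZ (sum_sumWeight hr0), sum_negMulLog_sumWeight hr0, zero_div, zero_add]
    rfl
end

section
/- Let r ≥ 2, n ≥ 1, and 0 < w₀ < 1. Let X_1, …, X_n be independent random variables with P(X_i = 0) = P(X_i = r) = 1/2 for i = 1, …, n − 1, and P(X_n = 0) = P(X_n = r) = w₀/2, P(X_n = j) = (1 − w₀)/(r − 1) for j = 1, …, r − 1. Then the entropy of S_n = X_1 + ⋯ + X_n equals w₀·H(B_n) + (1 − w₀)·(H(B_{n−1}) + log₂(r − 1)) + h(w₀). -/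
/-!
The first `n - 1` summands add up to `r · B_{n-1}`, which lives on `rℕ`. Adding `X_n`, its atoms
`0` and `r` keep the sum on `rℕ` and, by Vandermonde's identity, turn `r · B_{n-1}` into
`r · B_n` with total weight `w₀`; each `j ∈ {1, …, r - 1}` instead shifts `r · B_{n-1}` into the
residue class of `j` with weight `(1 - w₀)/(r - 1)`. So the law of `S_n` consists of `r` scaled
copies of binomial laws on disjoint supports, and `H(cP) = c H(P) - c log₂ c` for a scaled
distribution `cP` gives the formula.
-/

open MeasureTheory ProbabilityTheory Real

open Finset

noncomputable def binomWeight (m k : ℕ) : ℝ := (m.choose k : ℝ) * (2 : ℝ) ^ (-(m : ℤ))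

lemma HB_eq (m : ℕ) :
    HB m = -∑ k ∈ range (m + 1), binomWeight m k * logb 2 (binomWeight m k) := rfl

lemma binomWeight_pos {m k : ℕ} (hk : k ≤ m) : 0 < binomWeight m k :=
  mul_pos (by exact_mod_cast Nat.choose_pos hk) (by positivity)

lemma sum_binomWeight (m : ℕ) : ∑ k ∈ range (m + 1), binomWeight m k = 1 := by
  simp only [binomWeight, ← sum_mul, ← Nat.cast_sum, Nat.sum_range_choose]
  rw [zpow_neg, zpow_natCast]
  push_cast
  exact mul_inv_cancel₀ (by positivity)

lemma sum_antidiagonal_binomWeight (m k t : ℕ) :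
    ∑ p ∈ antidiagonal t, binomWeight m p.1 * binomWeight k p.2 = binomWeight (m + k) t := by
  simp only [binomWeight, Nat.add_choose_eq, Nat.cast_sum, Nat.cast_mul, sum_mul]
  refine sum_congr rfl fun p _ => ?_
  rw [Nat.cast_add, neg_add, zpow_add₀ two_ne_zero]
  ring

lemma sum_mul_logb_mul_binomWeight {c : ℝ} (hc : c ≠ 0) (m : ℕ) :
    ∑ k ∈ range (m + 1), c * binomWeight m k * logb 2 (c * binomWeight m k) =
      c * logb 2 c - c * HB m := by
  have hterm : ∀ k ∈ range (m + 1), c * binomWeight m k * logb 2 (c * binomWeight m k) =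
      c * logb 2 c * binomWeight m k + c * (binomWeight m k * logb 2 (binomWeight m k)) := by
    intro k hk
    rw [logb_mul hc (binomWeight_pos (Nat.lt_succ_iff.mp (mem_range.mp hk))).ne']
    ring
  rw [sum_congr rfl hterm, sum_add_distrib, ← mul_sum, ← mul_sum, sum_binomWeight, HB_eq]
  ring

lemma sum_range_mul_add_one {M : Type*} [AddCommMonoid M] (f : ℕ → M) {r : ℕ} (hr : 1 ≤ r)
    (n : ℕ) :
    ∑ m ∈ range (n * r + 1), f m =
      ∑ t ∈ range (n + 1), f (r * t) + ∑ t ∈ range n, ∑ j ∈ range (r - 1), f (r * t + (j + 1)) := by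
  induction n with
  | zero => simp
  | succ n ih =>
    obtain ⟨s, rfl⟩ : ∃ s, r = s + 1 := ⟨r - 1, by omega⟩
    have hblock : ∑ j ∈ range (s + 1), f (n * (s + 1) + 1 + j) =
        ∑ j ∈ range s, f ((s + 1) * n + (j + 1)) + f ((s + 1) * (n + 1)) := by
      rw [sum_range_succ]
      congr 1
      · exact sum_congr rfl fun j _ => congrArg f (by ring)
      · exact congrArg f (by ring)
    rw [show (n + 1) * (s + 1) + 1 = n * (s + 1) + 1 + (s + 1) by ring, sum_range_add, ih,
      hblock, Nat.add_sub_cancel, sum_range_succ (fun t => f ((s + 1) * t)) (n + 1),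
      sum_range_succ (fun t => ∑ j ∈ range s, f ((s + 1) * t + (j + 1))) n]
    abel

lemma neg_sum_mul_logb_of_mixture {r k : ℕ} {w : ℝ} (hr : 2 ≤ r) (hw0 : 0 < w) (hw1 : w < 1)
    (p : ℕ → ℝ) (hdvd : ∀ t, p (r * t) = w * binomWeight (k + 1) t)
    (hmid : ∀ t j, j < r - 1 → p (r * t + (j + 1)) = (1 - w) / (r - 1) * binomWeight k t) :
    -∑ m ∈ range ((k + 1) * r + 1), p m * logb 2 (p m) =
      w * HB (k + 1) + (1 - w) * (HB k + logb 2 (r - 1)) + binEnt w := by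
  set q : ℝ := (1 - w) / (r - 1) with hq
  have hr1 : (0 : ℝ) < r - 1 := by
    have : (2 : ℝ) ≤ r := by exact_mod_cast hr
    linarith
  have hrq : ((r : ℝ) - 1) * q = 1 - w := by
    rw [hq]
    field_simp
  have hlogq : logb 2 q = logb 2 (1 - w) - logb 2 (r - 1) := logb_div (by linarith) hr1.ne'
  have hblock : ∀ t ∈ range (k + 1),
      ∑ j ∈ range (r - 1), p (r * t + (j + 1)) * logb 2 (p (r * t + (j + 1))) =
        (r - 1) * (q * binomWeight k t * logb 2 (q * binomWeight k t)) := by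
    intro t _
    rw [sum_congr rfl fun j hj => by rw [hmid t j (mem_range.mp hj)], sum_const, card_range,
      nsmul_eq_mul, Nat.cast_sub (by omega : 1 ≤ r), Nat.cast_one]
  rw [sum_range_mul_add_one _ (by omega : 1 ≤ r), sum_congr rfl hblock, ← mul_sum]
  simp only [hdvd]
  rw [sum_mul_logb_mul_binomWeight hw0.ne',
    sum_mul_logb_mul_binomWeight (div_pos (by linarith) hr1).ne', hlogq, binEnt]
  linear_combination (logb 2 (r - 1) - logb 2 (1 - w) + HB k) * hrq

section

variable {Ω : Type*} [MeasurableSpace Ω] {μ : Measure Ω}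

lemma measureReal_add_eq_sum_antidiagonal [IsFiniteMeasure μ] {Y T : Ω → ℕ}
    (hY : Measurable Y) (hT : Measurable T) (hYT : IndepFun Y T μ) (m : ℕ) :
    μ.real {ω | Y ω + T ω = m} =
      ∑ p ∈ antidiagonal m, μ.real {ω | Y ω = p.1} * μ.real {ω | T ω = p.2} := by
  have hunion : {ω | Y ω + T ω = m} = ⋃ p ∈ antidiagonal m, Y ⁻¹' {p.1} ∩ T ⁻¹' {p.2} := by
    ext ω
    simp
  rw [hunion, measureReal_biUnion_finset]
  · refine sum_congr rfl fun p _ => ?_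
    simp only [Measure.real, hYT.measure_inter_preimage_eq_mul _ _ (measurableSet_singleton _)
      (measurableSet_singleton _), ENNReal.toReal_mul]
    rfl
  · intro p _ q _ hpq
    refine Set.disjoint_left.mpr fun ω hp hq => hpq ?_
    simp only [Set.mem_inter_iff, Set.mem_preimage, Set.mem_singleton_iff] at hp hq
    exact Prod.ext (hp.1.symm.trans hq.1) (hp.2.symm.trans hq.2)
  · exact fun p _ => (hY (measurableSet_singleton _)).inter (hT (measurableSet_singleton _))

variable {Y T : Ω → ℕ} {r : ℕ}

lemma measureReal_add_eq_sum_antidiagonal_mul [IsFiniteMeasure μ] (hr : 0 < r)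
    (hY : Measurable Y) (hT : Measurable T) (hYT : IndepFun Y T μ)
    (hT0 : ∀ m, ¬ r ∣ m → μ.real {ω | T ω = m} = 0) (t : ℕ) :
    μ.real {ω | Y ω + T ω = r * t} =
      ∑ p ∈ antidiagonal t, μ.real {ω | Y ω = r * p.1} * μ.real {ω | T ω = r * p.2} := by
  let scale : ℕ × ℕ ↪ ℕ × ℕ :=
    ⟨Prod.map (r * ·) (r * ·),
      (mul_right_injective₀ hr.ne').prodMap (mul_right_injective₀ hr.ne')⟩
  have hmap : ∑ p ∈ antidiagonal t, μ.real {ω | Y ω = r * p.1} * μ.real {ω | T ω = r * p.2} =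
      ∑ q ∈ (antidiagonal t).map scale, μ.real {ω | Y ω = q.1} * μ.real {ω | T ω = q.2} :=
    (sum_map _ scale fun q => μ.real {ω | Y ω = q.1} * μ.real {ω | T ω = q.2}).symm
  rw [measureReal_add_eq_sum_antidiagonal hY hT hYT, hmap]
  refine (sum_subset (fun p hp => ?_) fun p hp hpt => ?_).symm
  · obtain ⟨q, hq, rfl⟩ := mem_map.mp hp
    rw [HasAntidiagonal.mem_antidiagonal] at hq ⊢
    simp [scale, ← hq, mul_add]
  · -- a pair outside the image of `scale` has `r ∤ p.2`, so its `T`-factor vanishes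
    have hp2 : ¬ r ∣ p.2 := by
      rintro ⟨b, hb⟩
      rw [HasAntidiagonal.mem_antidiagonal] at hp
      have hbt : b ≤ t := Nat.le_of_mul_le_mul_left (by omega) hr
      refine hpt (mem_map.mpr ⟨(t - b, b), HasAntidiagonal.mem_antidiagonal.mpr (by omega), ?_⟩)
      ext
      · simp only [scale, Function.Embedding.coeFn_mk, Prod.map_fst, Nat.mul_sub]
        omega
      · exact hb.symm
    rw [hT0 _ hp2, mul_zero]

lemma measureReal_add_eq_mul_of_lt [IsFiniteMeasure μ] (hY : Measurable Y) (hT : Measurable T)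
    (hYT : IndepFun Y T μ) (hYr : ∀ ω, Y ω ≤ r)
    (hT0 : ∀ m, ¬ r ∣ m → μ.real {ω | T ω = m} = 0) {j : ℕ} (hj0 : 0 < j) (hjr : j < r)
    (t : ℕ) :
    μ.real {ω | Y ω + T ω = r * t + j} = μ.real {ω | Y ω = j} * μ.real {ω | T ω = r * t} := by
  rw [measureReal_add_eq_sum_antidiagonal hY hT hYT]
  refine sum_eq_single_of_mem (j, r * t) (HasAntidiagonal.mem_antidiagonal.mpr (add_comm _ _))
    fun p hp hpj => ?_
  rw [HasAntidiagonal.mem_antidiagonal] at hp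
  by_cases hp2 : r ∣ p.2
  · obtain ⟨b, hb⟩ := hp2
    -- `p.1 ≡ j (mod r)` and `p.1 ≠ j`, so `p.1` lies beyond the range of `Y`
    have hp1 : r < p.1 := by
      rcases lt_trichotomy b t with hbt | rfl | hbt
      · nlinarith
      · exact absurd (Prod.ext (by omega) hb) hpj
      · nlinarith
    have hempty : {ω | Y ω = p.1} = ∅ :=
      Set.eq_empty_of_forall_notMem fun ω hω => (hYr ω).not_gt (hω ▸ hp1)
    rw [hempty, measureReal_empty, zero_mul]
  · rw [hT0 _ hp2, mul_zero]

lemma measureReal_mul_eq_mul_binomWeight_one (hr : 0 < r) (hYr : ∀ ω, Y ω ≤ r) {c : ℝ}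
    (hY0 : μ.real {ω | Y ω = 0} = c / 2) (hYr' : μ.real {ω | Y ω = r} = c / 2) :
    ∀ a, μ.real {ω | Y ω = r * a} = c * binomWeight 1 a
  | 0 => by simp [hY0, binomWeight]; ring
  | 1 => by simp [hYr', binomWeight]; ring
  | a + 2 => by
    have hempty : {ω | Y ω = r * (a + 2)} = ∅ :=
      Set.eq_empty_of_forall_notMem fun ω hω =>
        (hYr ω).not_gt (hω ▸ lt_mul_of_one_lt_right hr (by omega))
    simp [hempty, binomWeight, Nat.choose_eq_zero_of_lt]

def IsScaledBinomial (μ : Measure Ω) (T : Ω → ℕ) (r k : ℕ) : Prop :=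
  ∀ m, μ.real {ω | T ω = m} = if r ∣ m then binomWeight k (m / r) else 0

namespace IsScaledBinomial

variable {k l : ℕ}

lemma measureReal_mul (hT : IsScaledBinomial μ T r k) (hr : 0 < r) (t : ℕ) :
    μ.real {ω | T ω = r * t} = binomWeight k t := by
  rw [hT, if_pos (dvd_mul_right r t), Nat.mul_div_cancel_left t hr]

lemma measureReal_of_not_dvd (hT : IsScaledBinomial μ T r k) {m : ℕ} (hm : ¬ r ∣ m) :
    μ.real {ω | T ω = m} = 0 := by
  rw [hT, if_neg hm]

lemma add [IsFiniteMeasure μ] (hY : IsScaledBinomial μ Y r k) (hT : IsScaledBinomial μ T r l)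
    (hr : 0 < r) (hYm : Measurable Y) (hTm : Measurable T) (hYT : IndepFun Y T μ) :
    IsScaledBinomial μ (fun ω => Y ω + T ω) r (k + l) := by
  intro m
  split_ifs with hm
  · obtain ⟨t, rfl⟩ := hm
    rw [Nat.mul_div_cancel_left t hr, measureReal_add_eq_sum_antidiagonal_mul hr hYm hTm hYT
      (fun _ => hT.measureReal_of_not_dvd), ← sum_antidiagonal_binomWeight]
    simp only [hY.measureReal_mul hr, hT.measureReal_mul hr]
  · rw [measureReal_add_eq_sum_antidiagonal hYm hTm hYT]
    refine sum_eq_zero fun p hp => ?_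
    rw [HasAntidiagonal.mem_antidiagonal] at hp
    by_cases hp1 : r ∣ p.1
    · have hp2 : ¬ r ∣ p.2 := fun hp2 => hm (hp ▸ dvd_add hp1 hp2)
      rw [hT.measureReal_of_not_dvd hp2, mul_zero]
    · rw [hY.measureReal_of_not_dvd hp1, zero_mul]

end IsScaledBinomial

lemma isScaledBinomial_zero [IsProbabilityMeasure μ] (hr : 0 < r) :
    IsScaledBinomial μ (fun _ => 0) r 0 := by
  intro m
  rcases Nat.eq_zero_or_pos m with rfl | hm
  · simp [binomWeight]
  · have hempty : {ω : Ω | 0 = m} = ∅ := Set.eq_empty_of_forall_notMem fun _ h => hm.ne h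
    split_ifs with hdvd
    · rw [hempty, measureReal_empty, binomWeight,
        Nat.choose_eq_zero_of_lt (Nat.div_pos (Nat.le_of_dvd hm hdvd) hr)]
      simp
    · rw [hempty, measureReal_empty]

lemma isScaledBinomial_one [IsProbabilityMeasure μ] (hr : 0 < r) (hYm : Measurable Y)
    (hYr : ∀ ω, Y ω ≤ r)
    (hY0 : μ.real {ω | Y ω = 0} = 1 / 2) (hYr' : μ.real {ω | Y ω = r} = 1 / 2) :
    IsScaledBinomial μ Y r 1 := by
  intro m
  split_ifs with hm
  · obtain ⟨a, rfl⟩ := hm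
    rw [Nat.mul_div_cancel_left a hr,
      measureReal_mul_eq_mul_binomWeight_one hr hYr hY0 hYr' a, one_mul]
  · have h0m : MeasurableSet {ω | Y ω = 0} := hYm (measurableSet_singleton 0)
    have hrm : MeasurableSet {ω | Y ω = r} := hYm (measurableSet_singleton r)
    have hdisj : Disjoint {ω | Y ω = 0} {ω | Y ω = r} :=
      Set.disjoint_left.mpr fun ω h0 hr' => hr.ne (h0.symm.trans hr')
    have hnull : μ.real ({ω | Y ω = 0} ∪ {ω | Y ω = r})ᶜ = 0 := by
      rw [probReal_compl_eq_one_sub (h0m.union hrm), measureReal_union hdisj hrm, hY0, hYr']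
      norm_num
    refine measureReal_mono_null (fun ω hω => ?_) hnull
    rintro (h0 | hr')
    · exact hm (hω ▸ h0 ▸ dvd_zero r)
    · exact hm (hω ▸ hr' ▸ dvd_refl r)

lemma isScaledBinomial_sum [IsProbabilityMeasure μ] {ι : Type*} {X : ι → Ω → ℕ} (hr : 0 < r)
    (hmeas : ∀ i, Measurable (X i)) (hindep : iIndepFun X μ) {k : ι → ℕ} (s : Finset ι)
    (hX : ∀ i ∈ s, IsScaledBinomial μ (X i) r (k i)) :
    IsScaledBinomial μ (fun ω => ∑ i ∈ s, X i ω) r (∑ i ∈ s, k i) := by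
  classical
  induction s using Finset.induction_on with
  | empty => simpa using isScaledBinomial_zero hr
  | insert a s ha ih =>
    have hind : IndepFun (X a) (fun ω => ∑ i ∈ s, X i ω) μ := by
      simpa only [Finset.sum_fn] using (hindep.indepFun_finsetSum_of_notMem hmeas ha).symm
    simp only [sum_insert ha]
    exact (hX a (mem_insert_self a s)).add (ih fun i hi => hX i (mem_insert_of_mem hi)) hr
      (hmeas a) (Finset.measurable_sum s fun i _ => hmeas i) hind

lemma entS_add_of_isScaledBinomial [IsFiniteMeasure μ] {k : ℕ} {w : ℝ} (hr : 2 ≤ r)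
    (hw0 : 0 < w) (hw1 : w < 1) (hYm : Measurable Y) (hTm : Measurable T)
    (hYT : IndepFun Y T μ) (hYr : ∀ ω, Y ω ≤ r)
    (hY0 : μ.real {ω | Y ω = 0} = w / 2) (hYr' : μ.real {ω | Y ω = r} = w / 2)
    (hYmid : ∀ j, 1 ≤ j → j ≤ r - 1 → μ.real {ω | Y ω = j} = (1 - w) / (r - 1))
    (hT : IsScaledBinomial μ T r k) :
    entS μ (fun ω => Y ω + T ω) ((k + 1) * r) =
      w * HB (k + 1) + (1 - w) * (HB k + logb 2 (r - 1)) + binEnt w := by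
  have hr0 : 0 < r := by omega
  refine neg_sum_mul_logb_of_mixture hr hw0 hw1 (fun m => μ.real {ω | Y ω + T ω = m})
    (fun t => ?_) fun t j hj => ?_
  · rw [measureReal_add_eq_sum_antidiagonal_mul hr0 hYm hTm hYT
      (fun _ => hT.measureReal_of_not_dvd), add_comm k, ← sum_antidiagonal_binomWeight, mul_sum]
    simp only [measureReal_mul_eq_mul_binomWeight_one hr0 hYr hY0 hYr', hT.measureReal_mul hr0,
      mul_assoc]
  · rw [measureReal_add_eq_mul_of_lt hYm hTm hYT hYr (fun _ => hT.measureReal_of_not_dvd)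
      (Nat.succ_pos j) (by omega), hYmid _ (by omega) (by omega), hT.measureReal_mul hr0]

end

/-- If `X₁, …, X_{n-1}` are uniform on `{0, r}` and `X_n` puts mass
`w₀/2` on each of `0` and `r` and mass `(1-w₀)/(r-1)` on each `j ∈ {1, …, r-1}`
(`0 < w₀ < 1`), then the entropy of `S_n = X₁ + ⋯ + X_n` equals
`w₀ H(B_n) + (1-w₀)(H(B_{n-1}) + log₂(r-1)) + h(w₀)`. -/
theorem entropy_of_mixture_sum (r n : ℕ) (hr : 2 ≤ r) (hn : 1 ≤ n)
    (w₀ : ℝ) (hw₀0 : 0 < w₀) (hw₀1 : w₀ < 1)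
    {Ω : Type*} [MeasurableSpace Ω] (μ : Measure Ω) [IsProbabilityMeasure μ]
    (X : Fin n → Ω → ℕ) (hmeas : ∀ i, Measurable (X i))
    (hindep : iIndepFun X μ)
    (hrange : ∀ i ω, X i ω ≤ r)
    (hfirst : ∀ i : Fin n, (i : ℕ) < n - 1 →
      (μ {ω | X i ω = 0}).toReal = 1 / 2 ∧ (μ {ω | X i ω = r}).toReal = 1 / 2)
    (hlast : ∀ i : Fin n, (i : ℕ) = n - 1 →
      (μ {ω | X i ω = 0}).toReal = w₀ / 2 ∧ (μ {ω | X i ω = r}).toReal = w₀ / 2 ∧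
      (∀ j, 1 ≤ j → j ≤ r - 1 →
        (μ {ω | X i ω = j}).toReal = (1 - w₀) / ((r : ℝ) - 1))) :
    entS μ (fun ω => ∑ i, X i ω) (n * r) =
      w₀ * HB n + (1 - w₀) * (HB (n - 1) + Real.logb 2 ((r : ℝ) - 1)) + binEnt w₀ := by
  obtain ⟨k, rfl⟩ : ∃ k, n = k + 1 := ⟨n - 1, by omega⟩
  set coins := univ.erase (Fin.last k)
  have hcard : ∑ i ∈ coins, 1 = k := by simp [coins]
  have hcoins : IsScaledBinomial μ (fun ω => ∑ i ∈ coins, X i ω) r k := by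
    have hsum := isScaledBinomial_sum (k := fun _ => 1) (by omega) hmeas hindep coins
      fun i hi =>
        have hik : (i : ℕ) < k := Fin.val_lt_last (ne_of_mem_erase hi)
        isScaledBinomial_one (by omega) (hmeas i) (hrange i) (hfirst i (by omega)).1
          (hfirst i (by omega)).2
    rwa [hcard] at hsum
  have hind : IndepFun (X (Fin.last k)) (fun ω => ∑ i ∈ coins, X i ω) μ := by
    simpa only [Finset.sum_fn] using
      (hindep.indepFun_finsetSum_of_notMem hmeas (notMem_erase _ _)).symm
  have hsplit : (fun ω => ∑ i, X i ω) = fun ω => X (Fin.last k) ω + ∑ i ∈ coins, X i ω :=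
    funext fun ω => (add_sum_erase _ _ (mem_univ _)).symm
  obtain ⟨h0, hr', hmid⟩ := hlast (Fin.last k) (by simp)
  rw [hsplit, Nat.add_sub_cancel]
  exact entS_add_of_isScaledBinomial hr hw₀0 hw₀1 (hmeas _)
    (Finset.measurable_sum _ fun i _ => hmeas i) hind (hrange _) h0 hr' hmid hcoins
end

section
/- Let r ≥ 1 and let X_1, X_2 be independent random variables taking values in {0, 1, …, r}, with S_2 = X_1 + X_2. Then P(S_2 = r)² − 4·P(S_2 = 0)·P(S_2 = 2r) ≥ (P(X_1 = 0)P(X_2 = r) − P(X_1 = r)P(X_2 = 0))² ≥ 0. In particular, the conditional distribution of S_2 given S_2 ≡ 0 (mod r), supported on {0, r, 2r}, is ultra-log-concave of order 2. -/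
/-!
The extreme values of `S₂` are attained only at `(0, 0)` and `(r, r)`, so with `a = P(X₁ = 0)`,
`c = P(X₁ = r)`, `b = P(X₂ = 0)`, `d = P(X₂ = r)` we get `P(S₂ = 0) = ab` and `P(S₂ = 2r) = cd`,
while `{S₂ = r}` contains the disjoint events `{X₁ = 0, X₂ = r}` and `{X₁ = r, X₂ = 0}`, so
`P(S₂ = r) ≥ ad + cb`. Hence `P(S₂ = r)² - 4abcd ≥ (ad + cb)² - 4(ad)(cb) = (ad - cb)²`.
-/

open MeasureTheory ProbabilityTheory Real

lemma sq_sub_le_sq_sub_four_mul {x y p : ℝ} (hx : 0 ≤ x) (hy : 0 ≤ y) (hp : x + y ≤ p) :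
    (x - y) ^ 2 ≤ p ^ 2 - 4 * x * y := by
  nlinarith [pow_le_pow_left₀ (add_nonneg hx hy) hp 2]

namespace ProbabilityTheory.IndepFun

variable {Ω : Type*} [MeasurableSpace Ω] {μ : Measure Ω} {X Y : Ω → ℕ}

lemma measureReal_eq_and_eq (hXY : IndepFun X Y μ) (i j : ℕ) :
    μ.real {ω | X ω = i ∧ Y ω = j} = μ.real {ω | X ω = i} * μ.real {ω | Y ω = j} := by
  simp only [measureReal_def, ← ENNReal.toReal_mul]
  exact congrArg ENNReal.toReal <|
    hXY.measure_inter_preimage_eq_mul {i} {j} MeasurableSet.of_discrete MeasurableSet.of_discrete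

lemma measureReal_add_eq_zero (hXY : IndepFun X Y μ) :
    μ.real {ω | X ω + Y ω = 0} = μ.real {ω | X ω = 0} * μ.real {ω | Y ω = 0} := by
  simp only [Nat.add_eq_zero_iff, hXY.measureReal_eq_and_eq]

lemma measureReal_add_eq_add_of_le (hXY : IndepFun X Y μ) {m n : ℕ} (hX : ∀ ω, X ω ≤ m)
    (hY : ∀ ω, Y ω ≤ n) :
    μ.real {ω | X ω + Y ω = m + n} = μ.real {ω | X ω = m} * μ.real {ω | Y ω = n} := by
  rw [← hXY.measureReal_eq_and_eq]
  congr 1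
  ext ω
  have := hX ω
  have := hY ω
  simp only [Set.mem_ofPred_eq]
  omega

lemma mul_add_mul_le_measureReal_add_eq [IsFiniteMeasure μ] (hXY : IndepFun X Y μ)
    (hX : Measurable X) (hY : Measurable Y) {n : ℕ} (hn : n ≠ 0) :
    μ.real {ω | X ω = 0} * μ.real {ω | Y ω = n} + μ.real {ω | X ω = n} * μ.real {ω | Y ω = 0} ≤
      μ.real {ω | X ω + Y ω = n} := by
  have hdisj : Disjoint {ω | X ω = 0 ∧ Y ω = n} {ω | X ω = n ∧ Y ω = 0} :=
    Set.disjoint_left.2 fun ω h h' => hn (h'.1.symm.trans h.1)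
  have hmeas : MeasurableSet {ω | X ω = n ∧ Y ω = 0} :=
    (hX (measurableSet_singleton n)).inter (hY (measurableSet_singleton 0))
  calc _ = μ.real ({ω | X ω = 0 ∧ Y ω = n} ∪ {ω | X ω = n ∧ Y ω = 0}) := by
        rw [measureReal_union hdisj hmeas, hXY.measureReal_eq_and_eq, hXY.measureReal_eq_and_eq]
    _ ≤ μ.real {ω | X ω + Y ω = n} := by
        refine measureReal_mono ?_
        rintro ω (⟨hX0, hYn⟩ | ⟨hXn, hY0⟩) <;> simp [*]

end ProbabilityTheory.IndepFun

/-- For independent `X₁, X₂` with values in `{0, …, r}` and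
`S₂ = X₁ + X₂`:
`P(S₂=r)² - 4 P(S₂=0) P(S₂=2r) ≥ (P(X₁=0)P(X₂=r) - P(X₁=r)P(X₂=0))² ≥ 0`;
in particular `P(S₂=r)² ≥ 4 P(S₂=0) P(S₂=2r)`, i.e. the conditional distribution of
`S₂` given `S₂ ≡ 0 (mod r)`, supported on `{0, r, 2r}`, is ultra-log-concave of order 2. -/
theorem sum_two_ulc (r : ℕ) (hr : 1 ≤ r)
    {Ω : Type*} [MeasurableSpace Ω] (μ : Measure Ω) [IsProbabilityMeasure μ]
    (X₁ X₂ : Ω → ℕ) (h₁ : Measurable X₁) (h₂ : Measurable X₂)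
    (hind : IndepFun X₁ X₂ μ)
    (hr₁ : ∀ ω, X₁ ω ≤ r) (hr₂ : ∀ ω, X₂ ω ≤ r) :
    (μ {ω | X₁ ω + X₂ ω = r}).toReal ^ 2 -
        4 * (μ {ω | X₁ ω + X₂ ω = 0}).toReal * (μ {ω | X₁ ω + X₂ ω = 2 * r}).toReal ≥
      ((μ {ω | X₁ ω = 0}).toReal * (μ {ω | X₂ ω = r}).toReal -
        (μ {ω | X₁ ω = r}).toReal * (μ {ω | X₂ ω = 0}).toReal) ^ 2 ∧
    ((μ {ω | X₁ ω = 0}).toReal * (μ {ω | X₂ ω = r}).toReal -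
        (μ {ω | X₁ ω = r}).toReal * (μ {ω | X₂ ω = 0}).toReal) ^ 2 ≥ 0 ∧
    (μ {ω | X₁ ω + X₂ ω = r}).toReal ^ 2 ≥
      4 * (μ {ω | X₁ ω + X₂ ω = 0}).toReal * (μ {ω | X₁ ω + X₂ ω = 2 * r}).toReal := by
  simp only [← measureReal_def]
  have hzero := hind.measureReal_add_eq_zero
  have htop : μ.real {ω | X₁ ω + X₂ ω = 2 * r} =
      μ.real {ω | X₁ ω = r} * μ.real {ω | X₂ ω = r} := by
    rw [two_mul]
    exact hind.measureReal_add_eq_add_of_le hr₁ hr₂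
  have hmid := hind.mul_add_mul_le_measureReal_add_eq h₁ h₂ (Nat.one_le_iff_ne_zero.1 hr)
  have hdiscr := sq_sub_le_sq_sub_four_mul (by positivity) (by positivity) hmid
  rw [hzero, htop]
  exact ⟨by linarith, sq_nonneg _, by linarith [(sq_nonneg _).trans hdiscr]⟩
end

section
/- Let X_1, X_2, X_3 be independent random variables taking values in {0, 1, 2} and S_3 = X_1 + X_2 + X_3. Then P(S_3 = 2)² ≥ 3·P(S_3 = 0)·P(S_3 = 4). -/
/-!
Write `aᵢ, bᵢ, cᵢ` for `P(Xᵢ = 0), P(Xᵢ = 1), P(Xᵢ = 2)`. By independence `P(S₃ = k)` is the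
coefficient of `tᵏ` in `∏ᵢ (aᵢ + bᵢ t + cᵢ t²)`. With `Uᵢ = cᵢ aⱼ aₖ` and `Gᵢ = aᵢ bⱼ bₖ`
(`{i, j, k} = {1, 2, 3}`) one has `P(S₃ = 2) = ∑ Uᵢ + ∑ Gᵢ` and
`P(S₃ = 0) P(S₃ = 4) = ∑_{i<j} Uᵢ Uⱼ + ∑ Uᵢ Gᵢ`, so the claim is the inequality
`3 (∑_{i<j} uᵢ uⱼ + ∑ uᵢ gᵢ) ≤ (∑ uᵢ + ∑ gᵢ)²` for nonnegative reals. The cross terms contribute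
`∑ gᵢ (2 (uⱼ + uₖ) - uᵢ)`, which is nonnegative unless one `uᵢ` dominates the other two; in that
case completing the square absorbs the single negative term.
-/

open MeasureTheory ProbabilityTheory Real

open Finset

lemma three_mul_le_sq_of_dominant {u₁ u₂ u₃ g₁ g₂ g₃ : ℝ} (hu₂ : 0 ≤ u₂) (hu₃ : 0 ≤ u₃)
    (hg₂ : 0 ≤ g₂) (hg₃ : 0 ≤ g₃) (hdom : 2 * (u₂ + u₃) ≤ u₁) :
    3 * (u₁ * u₂ + u₁ * u₃ + u₂ * u₃ + u₁ * g₁ + u₂ * g₂ + u₃ * g₃) ≤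
      (u₁ + u₂ + u₃ + g₁ + g₂ + g₃) ^ 2 := by
  nlinarith [sq_nonneg (2 * (g₁ + g₂ + g₃) - u₁ + 2 * u₂ + 2 * u₃), sq_nonneg (u₂ - u₃),
    mul_nonneg hg₂ (by linarith : (0 : ℝ) ≤ 2 * (u₁ + u₃) - u₂),
    mul_nonneg hg₃ (by linarith : (0 : ℝ) ≤ 2 * (u₁ + u₂) - u₃)]

lemma three_mul_le_sq_of_nonneg {u₁ u₂ u₃ g₁ g₂ g₃ : ℝ} (hu₁ : 0 ≤ u₁) (hu₂ : 0 ≤ u₂)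
    (hu₃ : 0 ≤ u₃) (hg₁ : 0 ≤ g₁) (hg₂ : 0 ≤ g₂) (hg₃ : 0 ≤ g₃) :
    3 * (u₁ * u₂ + u₁ * u₃ + u₂ * u₃ + u₁ * g₁ + u₂ * g₂ + u₃ * g₃) ≤
      (u₁ + u₂ + u₃ + g₁ + g₂ + g₃) ^ 2 := by
  rcases le_or_gt (2 * (u₂ + u₃)) u₁ with h₁ | h₁
  · exact three_mul_le_sq_of_dominant hu₂ hu₃ hg₂ hg₃ h₁
  rcases le_or_gt (2 * (u₁ + u₃)) u₂ with h₂ | h₂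
  · linarith [three_mul_le_sq_of_dominant (g₁ := g₂) hu₁ hu₃ hg₁ hg₃ h₂]
  rcases le_or_gt (2 * (u₁ + u₂)) u₃ with h₃ | h₃
  · linarith [three_mul_le_sq_of_dominant (g₁ := g₃) hu₁ hu₂ hg₁ hg₂ h₃]
  nlinarith [sq_nonneg (u₁ - u₂), sq_nonneg (u₁ - u₃), sq_nonneg (u₂ - u₃),
    mul_nonneg hg₁ (by linarith : (0 : ℝ) ≤ 2 * (u₂ + u₃) - u₁),
    mul_nonneg hg₂ (by linarith : (0 : ℝ) ≤ 2 * (u₁ + u₃) - u₂),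
    mul_nonneg hg₃ (by linarith : (0 : ℝ) ≤ 2 * (u₁ + u₂) - u₃)]

/-- The three polynomials are the coefficients of `t⁰`, `t⁴`, `t²` in `∏ᵢ (aᵢ + bᵢ t + cᵢ t²)`. -/
lemma three_mul_coeff_zero_mul_coeff_four_le_sq_coeff_two {a₁ a₂ a₃ b₁ b₂ b₃ c₁ c₂ c₃ : ℝ}
    (ha₁ : 0 ≤ a₁) (ha₂ : 0 ≤ a₂) (ha₃ : 0 ≤ a₃) (hb₁ : 0 ≤ b₁) (hb₂ : 0 ≤ b₂) (hb₃ : 0 ≤ b₃)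
    (hc₁ : 0 ≤ c₁) (hc₂ : 0 ≤ c₂) (hc₃ : 0 ≤ c₃) :
    3 * (a₁ * a₂ * a₃) *
        (c₁ * c₂ * a₃ + c₁ * a₂ * c₃ + a₁ * c₂ * c₃ + c₁ * b₂ * b₃ + b₁ * c₂ * b₃ + b₁ * b₂ * c₃) ≤
      (c₁ * a₂ * a₃ + a₁ * c₂ * a₃ + a₁ * a₂ * c₃ + a₁ * b₂ * b₃ + b₁ * a₂ * b₃ + b₁ * b₂ * a₃) ^ 2 := by
  have key := three_mul_le_sq_of_nonneg (u₁ := c₁ * a₂ * a₃) (u₂ := a₁ * c₂ * a₃)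
    (u₃ := a₁ * a₂ * c₃) (g₁ := a₁ * b₂ * b₃) (g₂ := b₁ * a₂ * b₃) (g₃ := b₁ * b₂ * a₃)
    (by positivity) (by positivity) (by positivity) (by positivity) (by positivity) (by positivity)
  linear_combination key

theorem ProbabilityTheory.IndepFun.measureReal_add_eq_sum_antidiagonal {Ω : Type*}
    [MeasurableSpace Ω] {μ : Measure Ω} [IsFiniteMeasure μ] {X Y : Ω → ℕ} (hX : Measurable X)
    (hY : Measurable Y) (hXY : IndepFun X Y μ) (n : ℕ) :
    μ.real {ω | X ω + Y ω = n} =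
      ∑ k ∈ antidiagonal n, μ.real (X ⁻¹' {k.1}) * μ.real (Y ⁻¹' {k.2}) := by
  have hfiber : {ω | X ω + Y ω = n} = ⋃ k ∈ antidiagonal n, X ⁻¹' {k.1} ∩ Y ⁻¹' {k.2} := by
    ext ω
    simp
  rw [hfiber, measureReal_biUnion_finset]
  · refine sum_congr rfl fun k _ => ?_
    simp only [measureReal_def, hXY.measure_inter_preimage_eq_mul _ _ (measurableSet_singleton _)
      (measurableSet_singleton _), ENNReal.toReal_mul]
  · intro k _ l _ hkl
    refine Set.disjoint_left.mpr fun ω hk hl => hkl ?_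
    simp only [Set.mem_inter_iff, Set.mem_preimage, Set.mem_singleton_iff] at hk hl
    exact Prod.ext (hk.1.symm.trans hl.1) (hk.2.symm.trans hl.2)
  · exact fun k _ => (hX (measurableSet_singleton _)).inter (hY (measurableSet_singleton _))

theorem ProbabilityTheory.iIndepFun.measureReal_sum_fin_three_eq {Ω : Type*}
    [MeasurableSpace Ω] {μ : Measure Ω} [IsFiniteMeasure μ] {X : Fin 3 → Ω → ℕ}
    (hindep : iIndepFun X μ) (hmeas : ∀ i, Measurable (X i)) (n : ℕ) :
    μ.real {ω | ∑ i, X i ω = n} =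
      ∑ k ∈ antidiagonal n, (∑ l ∈ antidiagonal k.1,
        μ.real (X 0 ⁻¹' {l.1}) * μ.real (X 1 ⁻¹' {l.2})) * μ.real (X 2 ⁻¹' {k.2}) := by
  have h012 := (hindep.indepFun_add_left hmeas 0 1 2 (by decide) (by decide))
    |>.measureReal_add_eq_sum_antidiagonal ((hmeas 0).add (hmeas 1)) (hmeas 2) n
  simp only [Fin.sum_univ_three]
  refine h012.trans (sum_congr rfl fun k _ => ?_)
  rw [← (hindep.indepFun (by decide : (0 : Fin 3) ≠ 1)).measureReal_add_eq_sum_antidiagonal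
    (hmeas 0) (hmeas 1)]
  rfl

/-- For independent `X₁, X₂, X₃` on `{0,1,2}` and `S₃ = X₁+X₂+X₃`: `P(S₃=2)² ≥ 3 P(S₃=0) P(S₃=4)`. -/
theorem sum_three_ulc_even_k1
    {Ω : Type*} [MeasurableSpace Ω] (μ : Measure Ω) [IsProbabilityMeasure μ]
    (X : Fin 3 → Ω → ℕ) (hmeas : ∀ i, Measurable (X i))
    (hindep : iIndepFun X μ)
    (hrange : ∀ i ω, X i ω ≤ 2) :
    (μ {ω | ∑ i, X i ω = 2}).toReal ^ 2 ≥
      3 * (μ {ω | ∑ i, X i ω = 0}).toReal * (μ {ω | ∑ i, X i ω = 4}).toReal := by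
  set p : Fin 3 → ℕ → ℝ := fun i k => μ.real (X i ⁻¹' {k})
  have hlaw (n : ℕ) : μ.real {ω | ∑ i, X i ω = n} =
      ∑ k ∈ antidiagonal n, (∑ l ∈ antidiagonal k.1, p 0 l.1 * p 1 l.2) * p 2 k.2 :=
    hindep.measureReal_sum_fin_three_eq hmeas n
  have hvanish : ∀ i k, 2 < k → p i k = 0 := fun i k hk => by
    have hempty : X i ⁻¹' {k} = ∅ := by
      ext ω
      simp only [Set.mem_preimage, Set.mem_singleton_iff, Set.mem_empty_iff_false, iff_false]
      exact fun h => absurd (hrange i ω) (by omega)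
    simp [p, hempty]
  have hp_nonneg : ∀ i k, 0 ≤ p i k := fun i k => measureReal_nonneg
  simp only [← measureReal_def, hlaw, Finset.Nat.sum_antidiagonal_eq_sum_range_succ_mk,
    sum_range_succ, sum_range_zero]
  norm_num [hvanish]
  linear_combination three_mul_coeff_zero_mul_coeff_four_le_sq_coeff_two
    (hp_nonneg 0 0) (hp_nonneg 1 0) (hp_nonneg 2 0) (hp_nonneg 0 1) (hp_nonneg 1 1)
    (hp_nonneg 2 1) (hp_nonneg 0 2) (hp_nonneg 1 2) (hp_nonneg 2 2)
end

section
/- Let X_1, X_2, X_3 be independent random variables taking values in {0, 1, 2} and S_3 = X_1 + X_2 + X_3. Then P(S_3 = 4)² ≥ 3·P(S_3 = 2)·P(S_3 = 6). -/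
open MeasureTheory ProbabilityTheory Real

open Finset

/-!
Write `aᵢ, bᵢ, cᵢ` for `P(Xᵢ = 0), P(Xᵢ = 1), P(Xᵢ = 2)`. The six terms of `P(S₃ = 4)` are
`A = c₁c₂a₃, B = c₁a₂c₃, C = a₁c₂c₃, D = c₁b₂b₃, E = b₁c₂b₃, F = b₁b₂c₃`, and
`P(S₃ = 2) P(S₃ = 6) = AB + BC + CA + AF + BE + CD`. The graph with these six edges is 3-partite
with parts `{A, D}, {B, F}, {C, E}`, so for the part sums `x, y, z` this form is at most
`xy + yz + zx ≤ (x + y + z)² / 3 = P(S₃ = 4)² / 3`.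
-/

noncomputable def sumMass {ι β : Type*} [Fintype ι] [DecidableEq ι] [AddCommMonoid β]
    [DecidableEq β] (t : Finset β) (p : ι → β → ℝ) (s : β) : ℝ :=
  ∑ v ∈ Fintype.piFinset (fun _ => t) with ∑ i, v i = s, ∏ i, p i (v i)

theorem measureReal_sum_eq_sumMass {Ω ι β : Type*} [MeasurableSpace Ω] {μ : Measure Ω}
    [IsFiniteMeasure μ] [Fintype ι] [DecidableEq ι] [AddCommMonoid β] [DecidableEq β]
    [MeasurableSpace β] [MeasurableSingletonClass β] {X : ι → Ω → β}
    (hX : ∀ i, Measurable (X i)) (hindep : iIndepFun X μ) {t : Finset β}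
    (ht : ∀ i ω, X i ω ∈ t) (s : β) :
    μ.real {ω | ∑ i, X i ω = s} = sumMass t (fun i b => μ.real (X i ⁻¹' {b})) s := by
  have hfiber (v : ι → β) : (fun ω i => X i ω) ⁻¹' {v} = ⋂ i ∈ univ, X i ⁻¹' {v i} := by
    ext ω; simp [funext_iff]
  have hunion : {ω | ∑ i, X i ω = s} =
      (fun ω i => X i ω) ⁻¹'
        ({v ∈ Fintype.piFinset fun _ => t | ∑ i, v i = s} : Finset (ι → β)) := by
    ext ω; simp [ht]
  rw [hunion, ← sum_measureReal_preimage_singleton _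
    fun v _ => hfiber v ▸ measurableSet_biInter _ fun i _ => hX i (measurableSet_singleton _)]
  refine sum_congr rfl fun v _ => ?_
  rw [hfiber, measureReal_def, hindep.measure_inter_preimage_eq_mul _
    fun i _ => measurableSet_singleton _, ENNReal.toReal_prod]
  rfl

theorem three_mul_le_sq_of_tripartite {a b c d e f : ℝ} (ha : 0 ≤ a) (hb : 0 ≤ b) (hc : 0 ≤ c)
    (hd : 0 ≤ d) (he : 0 ≤ e) (hf : 0 ≤ f) :
    3 * (a * b + b * c + c * a + a * f + b * e + c * d) ≤ (a + b + c + d + e + f) ^ 2 := by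
  set x := a + d
  set y := b + f
  set z := c + e
  calc 3 * (a * b + b * c + c * a + a * f + b * e + c * d)
      ≤ 3 * (x * y + y * z + z * x) := by
        nlinarith [mul_nonneg hd hb, mul_nonneg hd hf, mul_nonneg hf hc, mul_nonneg hf he,
          mul_nonneg he ha, mul_nonneg he hd]
    _ ≤ (x + y + z) ^ 2 := by nlinarith [sq_nonneg (x - y), sq_nonneg (y - z), sq_nonneg (z - x)]
    _ = (a + b + c + d + e + f) ^ 2 := by ring

theorem three_mul_sumMass_two_mul_sumMass_six_le (p : Fin 3 → ℕ → ℝ) (hp : ∀ i k, 0 ≤ p i k) :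
    3 * sumMass (range 3) p 2 * sumMass (range 3) p 6 ≤ sumMass (range 3) p 4 ^ 2 := by
  have h2 : {v ∈ Fintype.piFinset fun _ : Fin 3 => range 3 | ∑ i, v i = 2} =
      {![2, 0, 0], ![0, 2, 0], ![0, 0, 2], ![1, 1, 0], ![1, 0, 1], ![0, 1, 1]} := by decide
  have h4 : {v ∈ Fintype.piFinset fun _ : Fin 3 => range 3 | ∑ i, v i = 4} =
      {![2, 2, 0], ![2, 0, 2], ![0, 2, 2], ![2, 1, 1], ![1, 2, 1], ![1, 1, 2]} := by decide
  have h6 : {v ∈ Fintype.piFinset fun _ : Fin 3 => range 3 | ∑ i, v i = 6} = {![2, 2, 2]} := by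
    decide
  have m2 : sumMass (range 3) p 2 = p 0 2 * p 1 0 * p 2 0 + p 0 0 * p 1 2 * p 2 0
      + p 0 0 * p 1 0 * p 2 2 + p 0 1 * p 1 1 * p 2 0 + p 0 1 * p 1 0 * p 2 1
      + p 0 0 * p 1 1 * p 2 1 := by
    simp [sumMass, h2, Fin.prod_univ_three, add_assoc]
  have m4 : sumMass (range 3) p 4 = p 0 2 * p 1 2 * p 2 0 + p 0 2 * p 1 0 * p 2 2
      + p 0 0 * p 1 2 * p 2 2 + p 0 2 * p 1 1 * p 2 1 + p 0 1 * p 1 2 * p 2 1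
      + p 0 1 * p 1 1 * p 2 2 := by
    simp [sumMass, h4, Fin.prod_univ_three, add_assoc]
  have m6 : sumMass (range 3) p 6 = p 0 2 * p 1 2 * p 2 2 := by
    simp [sumMass, h6, Fin.prod_univ_three]
  have hp3 (x y z : ℕ) : 0 ≤ p 0 x * p 1 y * p 2 z :=
    mul_nonneg (mul_nonneg (hp _ _) (hp _ _)) (hp _ _)
  rw [m2, m4, m6]
  linear_combination three_mul_le_sq_of_tripartite (hp3 2 2 0) (hp3 2 0 2) (hp3 0 2 2)
    (hp3 2 1 1) (hp3 1 2 1) (hp3 1 1 2)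

/-- For independent `X₁, X₂, X₃` on `{0,1,2}` and `S₃ = X₁+X₂+X₃`: `P(S₃=4)² ≥ 3 P(S₃=2) P(S₃=6)`. -/
theorem sum_three_ulc_even_k2
    {Ω : Type*} [MeasurableSpace Ω] (μ : Measure Ω) [IsProbabilityMeasure μ]
    (X : Fin 3 → Ω → ℕ) (hmeas : ∀ i, Measurable (X i))
    (hindep : iIndepFun X μ)
    (hrange : ∀ i ω, X i ω ≤ 2) :
    (μ {ω | ∑ i, X i ω = 4}).toReal ^ 2 ≥
      3 * (μ {ω | ∑ i, X i ω = 2}).toReal * (μ {ω | ∑ i, X i ω = 6}).toReal := by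
  have hmass (s : ℕ) := measureReal_sum_eq_sumMass hmeas hindep
    (fun i ω => mem_range.2 (Nat.lt_succ_of_le (hrange i ω))) s
  simp only [ge_iff_le, ← measureReal_def, hmass]
  exact three_mul_sumMass_two_mul_sumMass_six_le _ fun _ _ => measureReal_nonneg
end

section
/- Let X_1, X_2, X_3 be independent random variables taking values in {0, 1, 2} and S_3 = X_1 + X_2 + X_3. Then P(S_3 = 3)² ≥ 4·P(S_3 = 1)·P(S_3 = 5). In particular, the conditional distribution of S_3 given S_3 odd, supported on {1, 3, 5}, is ultra-log-concave of order 2. -/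
/-!
With `aᵢ, bᵢ, cᵢ = P(Xᵢ = 0), P(Xᵢ = 1), P(Xᵢ = 2)`, independence makes `P(S₃ = n)` the
coefficient of `tⁿ` in `∏ᵢ (aᵢ + bᵢ t + cᵢ t²)`, so the claim is a polynomial inequality in nine
nonnegative variables. Among the three points `(aᵢ, cᵢ)` of the closed quadrant one is extremal in
slope order, say `(a₁c₂ - a₂c₁)(a₁c₃ - a₃c₁) ≥ 0`; then `P(S₃ = 3)² - 4 P(S₃ = 1) P(S₃ = 5)` is a
square plus `b₂b₃` times a nonnegative polynomial.
-/

open MeasureTheory ProbabilityTheory Real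

open Finset

section

variable {a₁ b₁ c₁ a₂ b₂ c₂ a₃ b₃ c₃ : ℝ}

theorem four_mul_mul_le_sq_of_cross_mul_nonneg
    (ha₁ : 0 ≤ a₁) (hb₁ : 0 ≤ b₁) (hc₁ : 0 ≤ c₁) (ha₂ : 0 ≤ a₂) (hb₂ : 0 ≤ b₂) (hc₂ : 0 ≤ c₂)
    (ha₃ : 0 ≤ a₃) (hb₃ : 0 ≤ b₃) (hc₃ : 0 ≤ c₃)
    (h : 0 ≤ (a₁ * c₂ - a₂ * c₁) * (a₁ * c₃ - a₃ * c₁)) :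
    4 * (b₁ * a₂ * a₃ + a₁ * b₂ * a₃ + a₁ * a₂ * b₃) *
        (b₁ * c₂ * c₃ + c₁ * b₂ * c₃ + c₁ * c₂ * b₃) ≤
      (b₁ * b₂ * b₃ + a₁ * b₂ * c₃ + a₁ * c₂ * b₃ + b₁ * a₂ * c₃ + b₁ * c₂ * a₃ + c₁ * a₂ * b₃ +
        c₁ * b₂ * a₃) ^ 2 := by
  have hR : 0 ≤ b₂ * b₃ * (b₁ ^ 2 * (b₂ * b₃ + 2 * a₂ * c₃ + 2 * a₃ * c₂) +
      2 * b₁ * (a₁ * (b₂ * c₃ + b₃ * c₂) + c₁ * (a₂ * b₃ + a₃ * b₂))) := by positivity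
  linear_combination
    sq_nonneg (b₁ * (a₂ * c₃ - a₃ * c₂) + a₁ * (b₂ * c₃ - b₃ * c₂) - c₁ * (a₃ * b₂ - a₂ * b₃)) +
      4 * mul_nonneg (mul_nonneg hb₂ hb₃) h + hR

theorem exists_cross_mul_nonneg
    (ha₁ : 0 ≤ a₁) (hc₁ : 0 ≤ c₁) (ha₂ : 0 ≤ a₂) (hc₂ : 0 ≤ c₂) (ha₃ : 0 ≤ a₃) (hc₃ : 0 ≤ c₃) :
    0 ≤ (a₁ * c₂ - a₂ * c₁) * (a₁ * c₃ - a₃ * c₁) ∨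
      0 ≤ (a₂ * c₁ - a₁ * c₂) * (a₂ * c₃ - a₃ * c₂) := by
  by_contra! ⟨hxy, h⟩
  set x := a₁ * c₂ - a₂ * c₁
  set y := a₁ * c₃ - a₃ * c₁
  set z := a₂ * c₃ - a₃ * c₂
  -- The cross products satisfy a₁z - a₂y + a₃x = 0 = c₁z - c₂y + c₃x, which rules out
  -- x, -y, z being all positive or all negative.
  have hxz : 0 < x * z := by linarith
  rcases lt_or_gt_of_ne (left_ne_zero_of_mul hxy.ne) with hx | hx
  · have hz : z < 0 := neg_of_mul_pos_right hxz hx.le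
    have hy : 0 < y := pos_of_mul_neg_right hxy hx.le
    nlinarith [mul_nonneg (mul_nonneg ha₁ hc₂) (neg_nonneg.2 hz.le),
      mul_nonneg (mul_nonneg ha₂ hc₂) hy.le, mul_nonneg (mul_nonneg ha₂ hc₃) (neg_nonneg.2 hx.le)]
  · have hz : 0 < z := pos_of_mul_pos_right hxz hx.le
    have hy : y < 0 := neg_of_mul_neg_right hxy hx.le
    nlinarith [mul_nonneg (mul_nonneg ha₂ hc₁) hz.le,
      mul_nonneg (mul_nonneg ha₂ hc₂) (neg_nonneg.2 hy.le), mul_nonneg (mul_nonneg ha₃ hc₂) hx.le]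

theorem four_mul_mul_le_sq_of_nonneg
    (ha₁ : 0 ≤ a₁) (hb₁ : 0 ≤ b₁) (hc₁ : 0 ≤ c₁) (ha₂ : 0 ≤ a₂) (hb₂ : 0 ≤ b₂) (hc₂ : 0 ≤ c₂)
    (ha₃ : 0 ≤ a₃) (hb₃ : 0 ≤ b₃) (hc₃ : 0 ≤ c₃) :
    4 * (b₁ * a₂ * a₃ + a₁ * b₂ * a₃ + a₁ * a₂ * b₃) *
        (b₁ * c₂ * c₃ + c₁ * b₂ * c₃ + c₁ * c₂ * b₃) ≤
      (b₁ * b₂ * b₃ + a₁ * b₂ * c₃ + a₁ * c₂ * b₃ + b₁ * a₂ * c₃ + b₁ * c₂ * a₃ + c₁ * a₂ * b₃ +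
        c₁ * b₂ * a₃) ^ 2 := by
  rcases exists_cross_mul_nonneg ha₁ hc₁ ha₂ hc₂ ha₃ hc₃ with h | h
  · exact four_mul_mul_le_sq_of_cross_mul_nonneg ha₁ hb₁ hc₁ ha₂ hb₂ hc₂ ha₃ hb₃ hc₃ h
  · linear_combination
      four_mul_mul_le_sq_of_cross_mul_nonneg ha₂ hb₂ hc₂ ha₁ hb₁ hc₁ ha₃ hb₃ hc₃ h

end

def convPMF {ι : Type*} [Fintype ι] [DecidableEq ι] (p : ι → ℕ → ℝ) (m n : ℕ) : ℝ :=
  ∑ v ∈ Fintype.piFinset (fun _ : ι => range (m + 1)) with ∑ i, v i = n, ∏ i, p i (v i)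

theorem convPMF_fin_three_odd_ulc (p : Fin 3 → ℕ → ℝ) (hp : ∀ i k, 0 ≤ p i k) :
    4 * convPMF p 2 1 * convPMF p 2 5 ≤ convPMF p 2 3 ^ 2 := by
  have h₁ : convPMF p 2 1 =
      p 0 1 * p 1 0 * p 2 0 + p 0 0 * p 1 1 * p 2 0 + p 0 0 * p 1 0 * p 2 1 := by
    rw [convPMF, show {v ∈ Fintype.piFinset (fun _ : Fin 3 => range (2 + 1)) | ∑ i, v i = 1} =
      {![1, 0, 0], ![0, 1, 0], ![0, 0, 1]} by decide]
    simp [Fin.prod_univ_three, add_assoc]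
  have h₃ : convPMF p 2 3 =
      p 0 1 * p 1 1 * p 2 1 + p 0 0 * p 1 1 * p 2 2 + p 0 0 * p 1 2 * p 2 1 +
        p 0 1 * p 1 0 * p 2 2 + p 0 1 * p 1 2 * p 2 0 + p 0 2 * p 1 0 * p 2 1 +
        p 0 2 * p 1 1 * p 2 0 := by
    rw [convPMF, show {v ∈ Fintype.piFinset (fun _ : Fin 3 => range (2 + 1)) | ∑ i, v i = 3} =
      {![1, 1, 1], ![0, 1, 2], ![0, 2, 1], ![1, 0, 2], ![1, 2, 0], ![2, 0, 1], ![2, 1, 0]} by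
        decide]
    simp [Fin.prod_univ_three, add_assoc]
  have h₅ : convPMF p 2 5 =
      p 0 1 * p 1 2 * p 2 2 + p 0 2 * p 1 1 * p 2 2 + p 0 2 * p 1 2 * p 2 1 := by
    rw [convPMF, show {v ∈ Fintype.piFinset (fun _ : Fin 3 => range (2 + 1)) | ∑ i, v i = 5} =
      {![1, 2, 2], ![2, 1, 2], ![2, 2, 1]} by decide]
    simp [Fin.prod_univ_three, add_assoc]
  rw [h₁, h₃, h₅]
  exact four_mul_mul_le_sq_of_nonneg (hp 0 0) (hp 0 1) (hp 0 2) (hp 1 0) (hp 1 1) (hp 1 2)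
    (hp 2 0) (hp 2 1) (hp 2 2)

section

variable {Ω ι : Type*} [MeasurableSpace Ω] {μ : Measure Ω} [Fintype ι]

theorem ProbabilityTheory.iIndepFun.measure_preimage_pi_singleton {β : Type*}
    [MeasurableSpace β] [MeasurableSingletonClass β] {X : ι → Ω → β} (h : iIndepFun X μ)
    (v : ι → β) :
    μ ((fun ω i => X i ω) ⁻¹' {v}) = ∏ i, μ (X i ⁻¹' {v i}) := by
  classical
  convert h.measure_inter_preimage_eq_mul univ (sets := fun i => {v i})
    fun _ _ => measurableSet_singleton _ using 2
  ext ω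
  simp [funext_iff]

theorem ProbabilityTheory.iIndepFun.measureReal_sum_eq_convPMF [DecidableEq ι]
    [IsFiniteMeasure μ] {X : ι → Ω → ℕ} (h : iIndepFun X μ) (hmeas : ∀ i, Measurable (X i)) {m : ℕ}
    (hX : ∀ i ω, X i ω ≤ m) (n : ℕ) :
    μ.real {ω | ∑ i, X i ω = n} = convPMF (fun i k => μ.real (X i ⁻¹' {k})) m n := by
  set T := {v ∈ Fintype.piFinset (fun _ : ι => range (m + 1)) | ∑ i, v i = n}
  have hset : {ω | ∑ i, X i ω = n} = (fun ω i => X i ω) ⁻¹' ↑T := by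
    ext ω
    simp [T, hX]
  rw [hset, measureReal_def, ← sum_measure_preimage_singleton T fun v _ =>
    measurable_pi_lambda _ hmeas (measurableSet_singleton v),
    ENNReal.toReal_sum fun _ _ => measure_ne_top μ _]
  simp [convPMF, T, h.measure_preimage_pi_singleton, measureReal_def]

end

/-- For independent `X₁, X₂, X₃` on `{0,1,2}` and `S₃ = X₁+X₂+X₃`: `P(S₃=3)² ≥ 4 P(S₃=1) P(S₃=5)`, i.e. the conditional distribution of `S₃` given `S₃` odd, supported on `{1,3,5}`, is ultra-log-concave of order 2. -/
theorem sum_three_ulc_odd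
    {Ω : Type*} [MeasurableSpace Ω] (μ : Measure Ω) [IsProbabilityMeasure μ]
    (X : Fin 3 → Ω → ℕ) (hmeas : ∀ i, Measurable (X i))
    (hindep : iIndepFun X μ)
    (hrange : ∀ i ω, X i ω ≤ 2) :
    (μ {ω | ∑ i, X i ω = 3}).toReal ^ 2 ≥
      4 * (μ {ω | ∑ i, X i ω = 1}).toReal * (μ {ω | ∑ i, X i ω = 5}).toReal := by
  simp only [← measureReal_def, hindep.measureReal_sum_eq_convPMF hmeas hrange]
  exact convPMF_fin_three_odd_ulc _ fun _ _ => measureReal_nonneg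
end
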